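/- arXiv:1507.07194 — 12 statements merged into one kernel-verified Lean document; each statement's English description precedes it below -/
import Mathlib

section
/- Let v_1, v_2, …, v_n be a smallest-last ordering of the vertices of a finite simple graph G (i.e., for each i, v_i has minimum degree in the induced subgraph G[{v_i, …, v_n}]). Let d̃_i denote the degree of v_i in G[{v_i, …, v_n}]. Then for every i, ζ(v_i) = max_{1 ≤ j ≤ i} d̃_j. -/
open SimpleGraph Finset

/-- The minimum degree of a subgraph `H` of `G`: the infimum over vertices of `H`
of the number of neighbors in `H`. -/
noncomputable def subMinDeg {V : Type*} (G : SimpleGraph V) (H : G.Subgraph) : ℕ :=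
  sInf ((fun v => (H.neighborSet v).ncard) '' H.verts)

/-- The degenerate degree `ζ(v)`: the maximum of `δ(H)` over all subgraphs `H` of `G`
containing `v`. -/
noncomputable def zeta {V : Type*} (G : SimpleGraph V) (v : V) : ℕ :=
  sSup {n | ∃ H : G.Subgraph, v ∈ H.verts ∧ subMinDeg G H = n}

/-- A vertex `u` is cheap if `ζ(u) = deg_G(u)` and `ζ(u) ≤ ζ(w)` for every `w ∈ N[u]`. -/
def Cheap {V : Type*} (G : SimpleGraph V) (u : V) : Prop :=
  zeta G u = (G.neighborSet u).ncard ∧ ∀ w, G.Adj u w → zeta G u ≤ zeta G w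

/-!
If `H` is a subgraph containing `v_i` and `v_j` is its vertex of least index, then `j ≤ i` and
all neighbours of `v_j` in `H` lie in `{v_j, …, v_n}`, so `δ(H) ≤ d̃_j`. Conversely, for `j ≤ i`
the induced subgraph `G[{v_j, …, v_n}]` contains `v_i`, and by the smallest-last property its
minimum degree is exactly `d̃_j`.
-/

namespace SimpleGraph

variable {V : Type*} {G : SimpleGraph V}

lemma subMinDeg_le_ncard_neighborSet {H : G.Subgraph} {v : V} (hv : v ∈ H.verts) :
    subMinDeg G H ≤ (H.neighborSet v).ncard :=
  Nat.sInf_le ⟨v, hv, rfl⟩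

lemma le_subMinDeg {H : G.Subgraph} {d : ℕ} (hH : H.verts.Nonempty)
    (h : ∀ v ∈ H.verts, d ≤ (H.neighborSet v).ncard) : d ≤ subMinDeg G H :=
  le_csInf (hH.image _) (by rintro _ ⟨v, hv, rfl⟩; exact h v hv)

lemma zeta_le {v : V} {m : ℕ} (h : ∀ H : G.Subgraph, v ∈ H.verts → subMinDeg G H ≤ m) :
    zeta G v ≤ m :=
  csSup_le' (by rintro _ ⟨H, hv, rfl⟩; exact h H hv)

lemma subMinDeg_le_zeta [Finite V] {H : G.Subgraph} {v : V} (hv : v ∈ H.verts) :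
    subMinDeg G H ≤ zeta G v := by
  refine le_csSup ⟨(G.neighborSet v).ncard, ?_⟩ ⟨H, hv, rfl⟩
  rintro _ ⟨H', hv', rfl⟩
  exact (subMinDeg_le_ncard_neighborSet hv').trans
    (Set.ncard_le_ncard (H'.neighborSet_subset v))

variable [Fintype V] [LinearOrder V] [DecidableRel G.Adj]

/-- `degreeIci G j v` is the degree of `v` in `G[{k | j ≤ k}]`; the paper's `d̃_j` is `degreeIci G j j`. -/
def degreeIci (G : SimpleGraph V) [DecidableRel G.Adj] (j v : V) : ℕ :=
  #{k | j ≤ k ∧ G.Adj v k}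

lemma ncard_neighborSet_induce_Ici {j v : V} (hv : j ≤ v) :
    (((⊤ : G.Subgraph).induce (Set.Ici j)).neighborSet v).ncard = degreeIci G j v := by
  rw [degreeIci, ← Set.ncard_coe_finset]
  congr 1
  ext k
  simp [hv]

lemma subMinDeg_induce_Ici {j : V} (hj : ∀ v, j ≤ v → degreeIci G j j ≤ degreeIci G j v) :
    subMinDeg G ((⊤ : G.Subgraph).induce (Set.Ici j)) = degreeIci G j j := by
  apply le_antisymm
  · rw [← ncard_neighborSet_induce_Ici le_rfl]
    exact subMinDeg_le_ncard_neighborSet le_rfl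
  · refine le_subMinDeg ⟨j, le_rfl⟩ fun v hv => ?_
    rw [ncard_neighborSet_induce_Ici hv]
    exact hj v hv

lemma subMinDeg_le_degreeIci {H : G.Subgraph} {j : V} (hj : IsLeast H.verts j) :
    subMinDeg G H ≤ degreeIci G j j := by
  refine (subMinDeg_le_ncard_neighborSet hj.1).trans ?_
  rw [degreeIci, ← Set.ncard_coe_finset]
  refine Set.ncard_le_ncard (fun w hw => ?_) (Finset.finite_toSet _)
  simpa using ⟨hj.2 (H.edge_vert hw.symm), H.adj_sub hw⟩

theorem zeta_eq_sup_degreeIci [LocallyFiniteOrderBot V] {i : V}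
    (hSL : ∀ j v, j ≤ v → degreeIci G j j ≤ degreeIci G j v) :
    zeta G i = (Iic i).sup fun j => degreeIci G j j := by
  apply le_antisymm
  · refine zeta_le fun H hi => ?_
    obtain ⟨j, hj, hjmin⟩ := Set.exists_min_image H.verts id (Set.toFinite _) ⟨i, hi⟩
    calc subMinDeg G H ≤ degreeIci G j j := subMinDeg_le_degreeIci ⟨hj, hjmin⟩
      _ ≤ _ := le_sup (f := fun j => degreeIci G j j) (mem_Iic.mpr (hjmin i hi))
  · refine Finset.sup_le fun j hj => ?_
    rw [← subMinDeg_induce_Ici (hSL j)]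
    exact subMinDeg_le_zeta (mem_Iic.mp hj)

end SimpleGraph

theorem stmt_1 {n : ℕ} (G : SimpleGraph (Fin n)) [DecidableRel G.Adj]
    (dt : Fin n → ℕ)
    (hdt : ∀ i, dt i = (Finset.univ.filter fun j => i ≤ j ∧ G.Adj i j).card)
    (hSL : ∀ i j : Fin n, i ≤ j →
      dt i ≤ (Finset.univ.filter fun k => i ≤ k ∧ G.Adj j k).card)
    (i : Fin n) :
    zeta G i = (Finset.Iic i).sup dt := by
  obtain rfl : dt = fun j => degreeIci G j j := funext hdt
  exact zeta_eq_sup_degreeIci hSL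
end

section
/- A finite simple graph G is ζ-regular (all vertices have the same degenerate degree) if and only if the maximum over all nonempty subgraphs K of G of δ(K) equals δ(G). -/
open SimpleGraph Finset

section Aux

set_option linter.unusedSectionVars false

variable {V : Type*} [Fintype V] (G : SimpleGraph V)

lemma subMinDeg_le_ncard (H : G.Subgraph) {v : V} (hv : v ∈ H.verts) :
    subMinDeg G H ≤ (G.neighborSet v).ncard := by
  have h1 : subMinDeg G H ≤ (H.neighborSet v).ncard :=
    Nat.sInf_le ⟨v, hv, rfl⟩
  exact h1.trans (Set.ncard_le_ncard (H.neighborSet_subset v) (Set.toFinite _))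

lemma ncard_le_card {v : V} : (G.neighborSet v).ncard ≤ Fintype.card V := by
  have := Set.ncard_le_ncard (Set.subset_univ (G.neighborSet v)) Set.finite_univ
  simpa [Set.ncard_univ] using this

variable [Nonempty V] [DecidableRel G.Adj]

lemma neighborSet_ncard_eq (v : V) : (G.neighborSet v).ncard = G.degree v := by
  rw [← SimpleGraph.card_neighborSet_eq_degree, ← Nat.card_coe_set_eq,
    Nat.card_eq_fintype_card]

lemma subMinDeg_top : subMinDeg G ⊤ = G.minDegree := by
  apply le_antisymm
  · obtain ⟨v, hv⟩ := G.exists_minimal_degree_vertex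
    have h1 : subMinDeg G ⊤ ≤ ((⊤ : G.Subgraph).neighborSet v).ncard :=
      Nat.sInf_le ⟨v, trivial, rfl⟩
    simpa [neighborSet_ncard_eq, ← hv] using h1
  · have hne : ((fun v => ((⊤ : G.Subgraph).neighborSet v).ncard) ''
        (⊤ : G.Subgraph).verts).Nonempty :=
      ⟨_, Classical.arbitrary V, trivial, rfl⟩
    obtain ⟨w, -, hw⟩ := Nat.sInf_mem hne
    calc G.minDegree ≤ G.degree w := G.minDegree_le_degree w
      _ = ((⊤ : G.Subgraph).neighborSet w).ncard := by
          simp [Subgraph.neighborSet_top, neighborSet_ncard_eq]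
      _ = subMinDeg G ⊤ := hw

lemma zeta_bddAbove (v : V) :
    BddAbove {n | ∃ H : G.Subgraph, v ∈ H.verts ∧ subMinDeg G H = n} := by
  refine ⟨Fintype.card V, ?_⟩
  rintro n ⟨H, hv, rfl⟩
  exact (subMinDeg_le_ncard G H hv).trans (ncard_le_card G)

lemma zeta_le_degree (v : V) : zeta G v ≤ (G.neighborSet v).ncard := by
  have hne : {n | ∃ H : G.Subgraph, v ∈ H.verts ∧ subMinDeg G H = n}.Nonempty :=
    ⟨G.minDegree, ⊤, trivial, subMinDeg_top G⟩
  obtain ⟨H, hv, hn⟩ := Nat.sSup_mem hne (zeta_bddAbove G v)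
  calc zeta G v = subMinDeg G H := hn.symm
    _ ≤ (G.neighborSet v).ncard := subMinDeg_le_ncard G H hv

lemma minDegree_le_zeta (v : V) : G.minDegree ≤ zeta G v :=
  le_csSup (zeta_bddAbove G v) ⟨⊤, trivial, subMinDeg_top G⟩

end Aux

theorem stmt_2 {V : Type*} [Fintype V] [Nonempty V] (G : SimpleGraph V)
    [DecidableRel G.Adj] :
    (∀ u v : V, zeta G u = zeta G v) ↔
      sSup {d | ∃ K : G.Subgraph, K.verts.Nonempty ∧ subMinDeg G K = d} = G.minDegree := by
  set S := {d | ∃ K : G.Subgraph, K.verts.Nonempty ∧ subMinDeg G K = d} with hS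
  have hSne : S.Nonempty := ⟨G.minDegree, ⊤, ⟨Classical.arbitrary V, trivial⟩, subMinDeg_top G⟩
  have hSbdd : BddAbove S := by
    refine ⟨Fintype.card V, ?_⟩
    rintro n ⟨K, ⟨w, hw⟩, rfl⟩
    exact (subMinDeg_le_ncard G K hw).trans (ncard_le_card G)
  constructor
  · intro h
    apply le_antisymm
    · obtain ⟨K, ⟨w, hw⟩, hK⟩ := Nat.sSup_mem hSne hSbdd
      obtain ⟨v, hv⟩ := G.exists_minimal_degree_vertex
      have h1 : sSup S ≤ zeta G w := by
        rw [← hK]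
        exact le_csSup (zeta_bddAbove G w) ⟨K, hw, rfl⟩
      have h2 : zeta G w ≤ G.minDegree := by
        rw [h w v, hv]
        exact (zeta_le_degree G v).trans_eq (neighborSet_ncard_eq G v)
      exact h1.trans h2
    · exact le_csSup hSbdd ⟨⊤, ⟨Classical.arbitrary V, trivial⟩, subMinDeg_top G⟩
  · intro h u v
    have key : ∀ x : V, zeta G x = G.minDegree := by
      intro x
      have hne : {n | ∃ H : G.Subgraph, x ∈ H.verts ∧ subMinDeg G H = n}.Nonempty :=
        ⟨G.minDegree, ⊤, trivial, subMinDeg_top G⟩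
      obtain ⟨H, hx, hn⟩ := Nat.sSup_mem hne (zeta_bddAbove G x)
      have h1 : zeta G x ≤ sSup S := by
        have : zeta G x = subMinDeg G H := hn.symm
        rw [this]
        exact le_csSup hSbdd ⟨H, ⟨x, hx⟩, rfl⟩
      exact le_antisymm (h ▸ h1) (minDegree_le_zeta G x)
    rw [key u, key v]
end

section
/- Every finite simple graph with at least one vertex contains a cheap vertex. -/
open SimpleGraph Finset

lemma subMinDeg_le {V : Type*} [Fintype V] (G : SimpleGraph V) (H : G.Subgraph)
    {v : V} (hv : v ∈ H.verts) : subMinDeg G H ≤ (G.neighborSet v).ncard := by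
  refine le_trans (Nat.sInf_le ⟨v, hv, rfl⟩) ?_
  exact Set.ncard_le_ncard (H.neighborSet_subset v) (Set.toFinite _)

lemma zeta_le {V : Type*} [Fintype V] (G : SimpleGraph V) (v : V) :
    zeta G v ≤ (G.neighborSet v).ncard := by
  refine csSup_le ⟨subMinDeg G ⊤, ⊤, Set.mem_univ v, rfl⟩ ?_
  rintro n ⟨H, hv, rfl⟩
  exact subMinDeg_le G H hv

lemma top_le_zeta {V : Type*} [Fintype V] (G : SimpleGraph V) (v : V) :
    subMinDeg G ⊤ ≤ zeta G v := by
  apply le_csSup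
  · exact ⟨(G.neighborSet v).ncard, by rintro n ⟨H, hv, rfl⟩; exact subMinDeg_le G H hv⟩
  · exact ⟨⊤, Set.mem_univ v, rfl⟩

theorem stmt_4 {V : Type*} [Fintype V] [Nonempty V] (G : SimpleGraph V) :
    ∃ u : V, Cheap G u := by
  obtain ⟨u, -, hu⟩ := Finset.exists_min_image Finset.univ
    (fun v => (G.neighborSet v).ncard) ⟨Classical.arbitrary V, Finset.mem_univ _⟩
  have hd : subMinDeg G ⊤ = (G.neighborSet u).ncard := by
    apply le_antisymm
    · have := Nat.sInf_le (s := (fun v => ((⊤ : G.Subgraph).neighborSet v).ncard) ''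
        (⊤ : G.Subgraph).verts) ⟨u, Set.mem_univ u, rfl⟩
      simpa [subMinDeg] using this
    · refine le_csInf ⟨((⊤ : G.Subgraph).neighborSet u).ncard, u, Set.mem_univ u, rfl⟩ ?_
      rintro n ⟨w, -, rfl⟩
      simpa using hu w (Finset.mem_univ w)
  have hzu : zeta G u = (G.neighborSet u).ncard :=
    le_antisymm (zeta_le G u) (hd ▸ top_le_zeta G u)
  exact ⟨u, hzu, fun w _ => hzu ▸ hd ▸ top_le_zeta G w⟩
end

section
/- For every finite simple graph G, the independence number satisfies α(G) ≥ Σ_{v ∈ V(G)} 1/(ζ(v)+1), where ζ(v) is the degenerate degree of v. -/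
open SimpleGraph Finset

/-!
A greedy argument. In the graph induced on the remaining vertex set `s`, pick a vertex `u`
of minimum degree `d`, put `u` into the independent set and delete its closed neighbourhood.
The induced graph on `s` is itself a subgraph of minimum degree `d`, so every vertex of `s` has
`ζ ≥ d`; hence the at most `d + 1` deleted vertices contribute at most `1` to the sum.
The remaining vertices only lose subgraphs, so their `ζ` can only decrease, and induction applies.
-/

section Zeta

variable {V : Type*}

lemma subMinDeg_le_ncard_neighborSet (G : SimpleGraph V) (H : G.Subgraph) {v : V}
    (hv : v ∈ H.verts) : subMinDeg G H ≤ (H.neighborSet v).ncard :=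
  Nat.sInf_le ⟨v, hv, rfl⟩

lemma le_subMinDeg (G : SimpleGraph V) (H : G.Subgraph) (hH : H.verts.Nonempty) {d : ℕ}
    (hd : ∀ v ∈ H.verts, d ≤ (H.neighborSet v).ncard) : d ≤ subMinDeg G H :=
  le_csInf (hH.image _) (Set.forall_mem_image.2 hd)

variable [Finite V]

lemma bddAbove_subMinDeg_of_mem (G : SimpleGraph V) (v : V) :
    BddAbove {n | ∃ H : G.Subgraph, v ∈ H.verts ∧ subMinDeg G H = n} := by
  refine ⟨(G.neighborSet v).ncard, ?_⟩
  rintro _ ⟨H, hv, rfl⟩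
  exact (subMinDeg_le_ncard_neighborSet G H hv).trans
    (Set.ncard_le_ncard (H.neighborSet_subset v))

lemma subMinDeg_le_zeta (G : SimpleGraph V) (H : G.Subgraph) {v : V} (hv : v ∈ H.verts) :
    subMinDeg G H ≤ zeta G v :=
  le_csSup (bddAbove_subMinDeg_of_mem G v) ⟨H, hv, rfl⟩

lemma zeta_mono {G₁ G₂ : SimpleGraph V} (h : G₁ ≤ G₂) (v : V) : zeta G₁ v ≤ zeta G₂ v := by
  refine csSup_le ⟨_, G₁.singletonSubgraph v, rfl, rfl⟩ ?_
  rintro _ ⟨H, hv, rfl⟩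
  exact subMinDeg_le_zeta G₂ { H with adj_sub := fun hab => h (H.adj_sub hab) } hv

lemma le_zeta_of_le_ncard_neighborSet {G : SimpleGraph V} {s : Set V}
    (hs : ∀ ⦃u w⦄, G.Adj u w → u ∈ s) {d : ℕ} (hd : ∀ v ∈ s, d ≤ (G.neighborSet v).ncard)
    {w : V} (hw : w ∈ s) : d ≤ zeta G w := by
  let H : G.Subgraph := ⟨s, G.Adj, fun h => h, fun h => hs h, G.symm⟩
  exact (le_subMinDeg G H ⟨w, hw⟩ hd).trans (subMinDeg_le_zeta G H hw)

end Zeta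

lemma spanningCoe_induce_adj {V : Type*} (G : SimpleGraph V) (s : Set V) {u w : V} :
    (G.induce s).spanningCoe.Adj u w ↔ G.Adj u w ∧ u ∈ s ∧ w ∈ s := by
  simp

lemma spanningCoe_induce_mono {V : Type*} (G : SimpleGraph V) {s t : Set V} (h : s ⊆ t) :
    (G.induce s).spanningCoe ≤ (G.induce t).spanningCoe := fun _ _ hadj => by
  rw [spanningCoe_induce_adj] at hadj ⊢
  exact ⟨hadj.1, h hadj.2.1, h hadj.2.2⟩

lemma sum_one_div_succ_le_one {ι : Type*} (D : Finset ι) (f : ι → ℕ) {d : ℕ}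
    (hD : #D ≤ d + 1) (hf : ∀ i ∈ D, d ≤ f i) : ∑ i ∈ D, (1 : ℝ) / (f i + 1) ≤ 1 := by
  calc ∑ i ∈ D, (1 : ℝ) / (f i + 1)
      ≤ ∑ _i ∈ D, (1 : ℝ) / (d + 1) := sum_le_sum fun i hi => Nat.one_div_le_one_div (hf i hi)
    _ = #D / (d + 1) := by rw [sum_const, nsmul_eq_mul, mul_one_div]
    _ ≤ 1 := div_le_one_of_le₀ (by exact_mod_cast hD) (by positivity)

theorem exists_isIndepSet_sum_le {V : Type*} [Finite V] (G : SimpleGraph V) (s : Finset V) :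
    ∃ t ⊆ s, G.IsIndepSet (t : Set V) ∧
      ∑ v ∈ s, (1 : ℝ) / (zeta (G.induce s).spanningCoe v + 1) ≤ #t := by
  classical
  induction s using Finset.strongInduction with | H s ih =>
  rcases s.eq_empty_or_nonempty with rfl | hs
  · exact ⟨∅, empty_subset _, by simp, by simp⟩
  set Gs := (G.induce s).spanningCoe
  obtain ⟨u, hus, hu_min⟩ := s.exists_min_image (fun v => (Gs.neighborSet v).ncard) hs
  set d := (Gs.neighborSet u).ncard
  have hd_le_zeta : ∀ v ∈ s, d ≤ zeta Gs v := fun _ hv =>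
    le_zeta_of_le_ncard_neighborSet (fun _ _ h => ((spanningCoe_induce_adj ..).1 h).2.1) hu_min hv
  set D := insert u (Gs.neighborSet u).toFinite.toFinset
  have hD : #D ≤ d + 1 :=
    (card_insert_le _ _).trans (Nat.add_le_add_right (Set.ncard_eq_toFinset_card _ _).ge 1)
  have hDs : D ⊆ s := insert_subset hus fun v hv => by
    simp only [Set.Finite.mem_toFinset, mem_neighborSet, Gs, spanningCoe_induce_adj] at hv
    exact hv.2.2
  obtain ⟨t, hts, ht, hsum⟩ := ih (s \ D) (sdiff_ssubset hDs (insert_nonempty _ _))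
  have hut : u ∉ t := fun h => (mem_sdiff.1 (hts h)).2 (mem_insert_self _ _)
  refine ⟨insert u t, insert_subset hus (hts.trans sdiff_subset), ?_, ?_⟩
  · have hnadj : ∀ w ∈ t, ¬G.Adj u w := fun w hw huw => (mem_sdiff.1 (hts hw)).2 <|
      mem_insert_of_mem <| by simpa [Gs, hus, huw] using (mem_sdiff.1 (hts hw)).1
    rw [coe_insert]
    exact ht.insert fun w hw _ => ⟨hnadj w hw, fun hwu => hnadj w hw hwu.symm⟩
  · have hrest : ∑ v ∈ s \ D, (1 : ℝ) / (zeta Gs v + 1) ≤ #t :=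
      (sum_le_sum fun v _ => Nat.one_div_le_one_div <|
        zeta_mono (spanningCoe_induce_mono G (coe_subset.2 sdiff_subset)) v).trans hsum
    calc ∑ v ∈ s, (1 : ℝ) / (zeta Gs v + 1)
        = ∑ v ∈ s \ D, (1 : ℝ) / (zeta Gs v + 1) + ∑ v ∈ D, (1 : ℝ) / (zeta Gs v + 1) :=
          (sum_sdiff hDs).symm
      _ ≤ #t + 1 := add_le_add hrest <|
          sum_one_div_succ_le_one D _ hD fun v hv => hd_le_zeta v (hDs hv)
      _ = #(insert u t) := by rw [card_insert_of_notMem hut, Nat.cast_succ]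

theorem stmt_5 {V : Type*} [Fintype V] (G : SimpleGraph V) :
    ∃ s : Finset V, (∀ u ∈ s, ∀ w ∈ s, u ≠ w → ¬ G.Adj u w) ∧
      (∑ v : V, (1 : ℝ) / (zeta G v + 1)) ≤ s.card := by
  obtain ⟨t, -, ht, hsum⟩ := exists_isIndepSet_sum_le G univ
  rw [coe_univ, spanningCoe_induce_univ] at hsum
  exact ⟨t, fun u hu w hw => ht hu hw, hsum⟩
end

section
/- If G is a connected, non-regular finite simple graph, then ζ(v) ≤ Δ(G) − 1 for every vertex v, and consequently α(G) ≥ n/Δ(G), where n = |V(G)| and Δ(G) is the maximum degree. -/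
open SimpleGraph Finset

lemma key_lemma {V : Type*} [Fintype V] (G : SimpleGraph V) [DecidableRel G.Adj]
    (hconn : G.Connected) (hreg : ¬ ∃ d, G.IsRegularOfDegree d)
    (A : Finset V) (hA : A.Nonempty) :
    ∃ v ∈ A, (A.filter (G.Adj v)).card + 1 ≤ G.maxDegree := by
  by_contra hcon
  push_neg at hcon
  -- every v ∈ A has ≥ Δ neighbors inside A
  have hbig : ∀ v ∈ A, G.maxDegree ≤ (A.filter (G.Adj v)).card := by
    intro v hv; have := hcon v hv; omega
  have closed : ∀ v ∈ A, ∀ w, G.Adj v w → w ∈ A := by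
    intro v hv w hw
    have hsub : A.filter (G.Adj v) ⊆ G.neighborFinset v := by
      intro x hx; simp only [Finset.mem_filter] at hx
      simpa [SimpleGraph.mem_neighborFinset] using hx.2
    have hdeg : (G.neighborFinset v).card ≤ (A.filter (G.Adj v)).card := by
      calc (G.neighborFinset v).card = G.degree v := (G.card_neighborFinset_eq_degree v)
        _ ≤ G.maxDegree := G.degree_le_maxDegree v
        _ ≤ _ := hbig v hv
    have heq := Finset.eq_of_subset_of_card_le hsub hdeg
    have : w ∈ G.neighborFinset v := by simpa [SimpleGraph.mem_neighborFinset] using hw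
    rw [← heq] at this
    exact (Finset.mem_filter.mp this).1
  have allA : ∀ (x u : V), G.Walk x u → x ∈ A → u ∈ A := by
    intro x u p
    induction p with
    | nil => exact id
    | cons h p ih => intro hx; exact ih (closed _ hx _ h)
  obtain ⟨a, ha⟩ := hA
  have hall : ∀ u, u ∈ A := fun u => allA a u (hconn.preconnected a u).some ha
  apply hreg
  refine ⟨G.maxDegree, fun v => ?_⟩
  have h1 : G.maxDegree ≤ G.degree v := by
    refine le_trans (hbig v (hall v)) ?_
    rw [← G.card_neighborFinset_eq_degree]
    apply Finset.card_le_card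
    intro x hx
    simpa [SimpleGraph.mem_neighborFinset] using (Finset.mem_filter.mp hx).2
  exact le_antisymm (G.degree_le_maxDegree v) h1

lemma maxDegree_pos {V : Type*} [Fintype V] (G : SimpleGraph V) [DecidableRel G.Adj]
    (hreg : ¬ ∃ d, G.IsRegularOfDegree d) : 0 < G.maxDegree := by
  by_contra h
  push_neg at h
  interval_cases h' : G.maxDegree
  exact hreg ⟨0, fun v => Nat.le_antisymm (h' ▸ G.degree_le_maxDegree v) (Nat.zero_le _)⟩

lemma greedy {V : Type*} [Fintype V] [DecidableEq V] (G : SimpleGraph V) [DecidableRel G.Adj]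
    (hconn : G.Connected) (hreg : ¬ ∃ d, G.IsRegularOfDegree d) :
    ∀ (n : ℕ) (A : Finset V), A.card ≤ n →
      ∃ s : Finset V, s ⊆ A ∧ (∀ u ∈ s, ∀ w ∈ s, u ≠ w → ¬ G.Adj u w) ∧
        A.card ≤ G.maxDegree * s.card := by
  intro n
  induction n with
  | zero =>
    intro A hA
    refine ⟨∅, Finset.empty_subset _, by simp, by simpa using hA⟩
  | succ n ih =>
    intro A hA
    rcases A.eq_empty_or_nonempty with rfl | hne
    · exact ⟨∅, Finset.empty_subset _, by simp, by simp⟩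
    obtain ⟨v, hv, hdeg⟩ := key_lemma G hconn hreg A hne
    set C := insert v (A.filter (G.Adj v)) with hC
    have hBn : (A \ C).card ≤ n := by
      have h1 : A \ C ⊆ A.erase v := by
        intro x hx
        rw [Finset.mem_sdiff] at hx
        refine Finset.mem_erase.mpr ⟨?_, hx.1⟩
        intro h; exact hx.2 (h ▸ Finset.mem_insert_self v _)
      have := Finset.card_le_card h1
      have h2 := Finset.card_erase_of_mem hv
      omega
    obtain ⟨s, hsub, hind, hcard⟩ := ih (A \ C) hBn
    have hvs : v ∉ s := fun h => by
      have := Finset.mem_sdiff.mp (hsub h)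
      exact this.2 (Finset.mem_insert_self v _)
    have hnotadj : ∀ w ∈ s, ¬ G.Adj v w := by
      intro w hw hadj
      have hmem := Finset.mem_sdiff.mp (hsub hw)
      exact hmem.2 (Finset.mem_insert_of_mem (Finset.mem_filter.mpr ⟨hmem.1, hadj⟩))
    refine ⟨insert v s, ?_, ?_, ?_⟩
    · intro x hx
      rcases Finset.mem_insert.mp hx with rfl | hx
      · exact hv
      · exact (Finset.mem_sdiff.mp (hsub hx)).1
    · intro u hu w hw hne hadj
      rcases Finset.mem_insert.mp hu with heq | hu' <;>
        rcases Finset.mem_insert.mp hw with heq2 | hw'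
      · exact hne (heq.trans heq2.symm)
      · subst heq; exact hnotadj w hw' hadj
      · subst heq2; exact hnotadj u hu' hadj.symm
      · exact hind u hu' w hw' hne hadj
    · have hsplit : A.card ≤ (A \ C).card + C.card := Finset.card_le_card_sdiff_add_card
      have hCcard : C.card ≤ G.maxDegree := by
        rw [hC]
        have := Finset.card_insert_le v (A.filter (G.Adj v))
        omega
      rw [Finset.card_insert_of_notMem hvs, Nat.mul_add, Nat.mul_one]
      omega

theorem stmt_9 {V : Type*} [Fintype V] (G : SimpleGraph V) [DecidableRel G.Adj]
    (hconn : G.Connected) (hreg : ¬ ∃ d, G.IsRegularOfDegree d) :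
    (∀ v : V, zeta G v ≤ G.maxDegree - 1) ∧
      ∃ s : Finset V, (∀ u ∈ s, ∀ w ∈ s, u ≠ w → ¬ G.Adj u w) ∧
        (Fintype.card V : ℝ) / (G.maxDegree : ℝ) ≤ s.card := by
  classical
  constructor
  · intro v
    apply csSup_le'
    rintro n ⟨H, hvH, rfl⟩
    have hfin : H.verts.Finite := Set.toFinite _
    set A : Finset V := hfin.toFinset with hAdef
    have hAne : A.Nonempty := ⟨v, by rw [hAdef, Set.Finite.mem_toFinset]; exact hvH⟩
    obtain ⟨u, hu, hdeg⟩ := key_lemma G hconn hreg A hAne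
    have huV : u ∈ H.verts := by rw [hAdef, Set.Finite.mem_toFinset] at hu; exact hu
    have hle : subMinDeg G H ≤ (H.neighborSet u).ncard :=
      Nat.sInf_le ⟨u, huV, rfl⟩
    have hsub : (H.neighborSet u).ncard ≤ (A.filter (G.Adj u)).card := by
      rw [← Set.ncard_coe_finset]
      apply Set.ncard_le_ncard
      · intro w hw
        simp only [Finset.coe_filter, Set.mem_setOf_eq]
        exact ⟨by rw [hAdef, Set.Finite.mem_toFinset]; exact hw.snd_mem, hw.adj_sub⟩
      · exact (A.filter (G.Adj u) : Set V).toFinite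
    omega
  · obtain ⟨s, _, hind, hcard⟩ :=
      greedy G hconn hreg (Fintype.card V) Finset.univ (by simp)
    refine ⟨s, hind, ?_⟩
    have hΔ : 0 < G.maxDegree := maxDegree_pos G hreg
    rw [Finset.card_univ] at hcard
    rw [div_le_iff₀ (by exact_mod_cast hΔ)]
    calc (Fintype.card V : ℝ) ≤ (G.maxDegree * s.card : ℕ) := by exact_mod_cast hcard
      _ = s.card * G.maxDegree := by push_cast; ring
end

section
/- Let G be a finite simple graph and u, w two adjacent vertices such that u is cheap in G, u is the only cheap vertex of G adjacent to w, and w is cheap in G − u. Then S = {u, w} is a 1-cheap set: Σ_{v ∈ N[S]} 1/(ζ(v) + 1/2) ≤ 2 and the induced subgraph on S has maximum degree at most 1. -/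
open SimpleGraph Finset

/-!
Write `d = ζ(u) = deg u` and `k = ζ_{G-u}(w) = deg_{G-u} w`. The closed neighbourhood of `{u, w}`
is covered by `w`, the `d` vertices of `N[u]` other than `w`, and the `k` neighbours of `w` other
than `u`. Cheapness of `u` gives `ζ ≥ d` on `N[u]`; cheapness of `w` in `G - u`, together with
`ζ_{G-u} ≤ ζ_G`, gives `ζ ≥ k` on `N(w) - u`; and `ζ(w) ≥ max d k`. With `φ n = 1 / (n + 1/2)`
one has `n φ n = 1 - φ n / 2`, so the weighted sum is at most
`2 - (φ d + φ k) / 2 + φ (max d k) ≤ 2`.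
-/

/-- The weight `1 / (ζ + 1/(k+1))` of a vertex in the definition of a `k`-cheap set, for `k = 1`. -/
noncomputable def cheapWeight (n : ℕ) : ℝ := 1 / (n + 1/2)

theorem cheapWeight_nonneg (n : ℕ) : 0 ≤ cheapWeight n := by
  unfold cheapWeight
  positivity

theorem cheapWeight_antitone : Antitone cheapWeight := fun m n h => by
  unfold cheapWeight
  gcongr

theorem natCast_mul_cheapWeight (n : ℕ) : n * cheapWeight n = 1 - cheapWeight n / 2 := by
  unfold cheapWeight
  field_simp
  ring

theorem sum_cheapWeight_le {α : Type*} (s : Finset α) (g : α → ℕ) {n : ℕ}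
    (h : ∀ x ∈ s, n ≤ g x) : ∑ x ∈ s, cheapWeight (g x) ≤ s.card * cheapWeight n := by
  simpa using Finset.sum_le_card_nsmul s _ _ fun x hx => cheapWeight_antitone (h x hx)

theorem mul_cheapWeight_add_cheapWeight_max_add_mul_cheapWeight_le_two (d k : ℕ) :
    d * cheapWeight d + cheapWeight (max d k) + k * cheapWeight k ≤ 2 := by
  have hd := cheapWeight_antitone (le_max_left d k)
  have hk := cheapWeight_antitone (le_max_right d k)
  linarith [natCast_mul_cheapWeight d, natCast_mul_cheapWeight k]

theorem Finset.sum_union_le_add {α M : Type*} [DecidableEq α] [AddCommMonoid M] [PartialOrder M]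
    [IsOrderedAddMonoid M] {s t : Finset α} {f : α → M} (hf : ∀ x ∈ s ∩ t, 0 ≤ f x) :
    ∑ x ∈ s ∪ t, f x ≤ ∑ x ∈ s, f x + ∑ x ∈ t, f x := by
  rw [← Finset.sum_union_inter]
  exact le_add_of_nonneg_right (Finset.sum_nonneg hf)

namespace SimpleGraph

variable {V W : Type*}

theorem Subgraph.neighborSet_map_of_injective {G : SimpleGraph V} {G' : SimpleGraph W}
    (f : G →g G') (hf : Function.Injective f) (H : G.Subgraph) (v : V) :
    (H.map f).neighborSet (f v) = f '' H.neighborSet v := by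
  ext y
  constructor
  · rintro ⟨a, b, hab, ha, rfl⟩
    exact ⟨b, hf ha ▸ hab, rfl⟩
  · rintro ⟨b, hb, rfl⟩
    exact ⟨v, b, hb, rfl, rfl⟩

theorem subMinDeg_map_of_injective {G : SimpleGraph V} {G' : SimpleGraph W}
    (f : G →g G') (hf : Function.Injective f) (H : G.Subgraph) :
    subMinDeg G' (H.map f) = subMinDeg G H := by
  unfold subMinDeg
  rw [Subgraph.map_verts, Set.image_image]
  congr 1
  refine Set.image_congr fun v _ => ?_
  rw [Subgraph.neighborSet_map_of_injective f hf, Set.ncard_image_of_injective _ hf]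

theorem bddAbove_zeta_set [Finite V] (G : SimpleGraph V) (v : V) :
    BddAbove {n | ∃ H : G.Subgraph, v ∈ H.verts ∧ subMinDeg G H = n} := by
  refine ⟨Nat.card V, ?_⟩
  rintro n ⟨H, hv, rfl⟩
  exact (Nat.sInf_le (Set.mem_image_of_mem _ hv)).trans (Set.ncard_le_card _)

theorem zeta_le_of_embedding [Finite W] {G : SimpleGraph V} {G' : SimpleGraph W}
    (f : G ↪g G') (v : V) : zeta G v ≤ zeta G' (f v) := by
  refine csSup_le_csSup' (bddAbove_zeta_set G' (f v)) ?_
  rintro n ⟨H, hv, rfl⟩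
  exact ⟨H.map f.toHom, ⟨v, hv, rfl⟩, subMinDeg_map_of_injective f.toHom f.injective H⟩

theorem zeta_induce_le [Finite V] (G : SimpleGraph V) (s : Set V) (v : s) :
    zeta (G.induce s) v ≤ zeta G v :=
  zeta_le_of_embedding (Embedding.induce s) v

theorem card_filter_adj_pair_le_one [DecidableEq V] (G : SimpleGraph V) [DecidableRel G.Adj]
    {u w v : V} (hv : v ∈ ({u, w} : Finset V)) :
    (({u, w} : Finset V).filter (G.Adj v)).card ≤ 1 := by
  have hsub : ({u, w} : Finset V).filter (G.Adj v) ⊆ ({u, w} : Finset V).erase v :=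
    fun x hx => Finset.mem_erase.mpr
      ⟨(G.ne_of_adj (Finset.mem_filter.mp hx).2).symm, (Finset.mem_filter.mp hx).1⟩
  calc _ ≤ (({u, w} : Finset V).erase v).card := Finset.card_le_card hsub
    _ ≤ 1 := by
        rw [Finset.card_erase_of_mem hv]
        have := Finset.card_le_two (a := u) (b := w)
        omega

variable [Fintype V] {G : SimpleGraph V} [DecidableRel G.Adj] {u w : V}

theorem Cheap.card_neighborFinset (hu : Cheap G u) : (G.neighborFinset u).card = zeta G u := by
  rw [hu.1, ← Set.ncard_coe_finset, coe_neighborFinset]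

variable [DecidableEq V]

theorem sum_closedNbhd_pair_le {f : V → ℝ} (hf : ∀ v, 0 ≤ f v) (u w : V) :
    ∑ v ∈ univ.filter (fun v => v = u ∨ v = w ∨ G.Adj u v ∨ G.Adj w v), f v ≤
      f w + ∑ v ∈ (insert u (G.neighborFinset u)).erase w, f v +
        ∑ v ∈ (G.neighborFinset w).erase u, f v := by
  have hsub : univ.filter (fun v => v = u ∨ v = w ∨ G.Adj u v ∨ G.Adj w v) ⊆
      {w} ∪ (insert u (G.neighborFinset u)).erase w ∪ (G.neighborFinset w).erase u := by
    intro v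
    simp only [mem_filter, mem_univ, true_and, mem_union, mem_singleton, mem_erase, mem_insert,
      mem_neighborFinset]
    grind
  calc _ ≤ ∑ v ∈ {w} ∪ (insert u (G.neighborFinset u)).erase w ∪ (G.neighborFinset w).erase u,
        f v := Finset.sum_le_sum_of_subset_of_nonneg hsub fun v _ _ => hf v
    _ ≤ _ := by
        refine (Finset.sum_union_le_add fun v _ => hf v).trans ?_
        gcongr
        exact (Finset.sum_union_le_add fun v _ => hf v).trans_eq (by rw [Finset.sum_singleton])

theorem Cheap.sum_cheapWeight_erase_closedNbhd_le (hu : Cheap G u) (huw : G.Adj u w) :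
    ∑ v ∈ (insert u (G.neighborFinset u)).erase w, cheapWeight (zeta G v) ≤
      zeta G u * cheapWeight (zeta G u) := by
  have hcard : ((insert u (G.neighborFinset u)).erase w).card = zeta G u := by
    rw [card_erase_of_mem (mem_insert_of_mem ((mem_neighborFinset G u w).mpr huw)),
      card_insert_of_notMem (notMem_neighborFinset_self G u), hu.card_neighborFinset,
      Nat.add_sub_cancel]
  refine (sum_cheapWeight_le _ _ fun x hx => ?_).trans_eq (by rw [hcard])
  rcases mem_insert.mp (mem_of_mem_erase hx) with rfl | hx
  · exact le_rfl
  · exact hu.2 x ((mem_neighborFinset G u x).mp hx)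

theorem Cheap.card_erase_neighborFinset_of_induce {hwu : w ≠ u}
    (hw : Cheap (G.induce {x | x ≠ u}) ⟨w, hwu⟩) :
    ((G.neighborFinset w).erase u).card = zeta (G.induce {x | x ≠ u}) ⟨w, hwu⟩ := by
  have hnbr : Subtype.val '' (G.induce {x | x ≠ u}).neighborSet ⟨w, hwu⟩ =
      ↑((G.neighborFinset w).erase u) := by
    rw [neighborSet_induce, Subtype.image_preimage_coe, Finset.coe_erase, coe_neighborFinset]
    ext x
    simp [and_comm]
  rw [hw.1, ← Set.ncard_image_of_injective _ Subtype.val_injective, hnbr, Set.ncard_coe_finset]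

theorem Cheap.sum_cheapWeight_erase_neighborFinset_le_of_induce {hwu : w ≠ u}
    (hw : Cheap (G.induce {x | x ≠ u}) ⟨w, hwu⟩) :
    ∑ v ∈ (G.neighborFinset w).erase u, cheapWeight (zeta G v) ≤
      zeta (G.induce {x | x ≠ u}) ⟨w, hwu⟩ *
        cheapWeight (zeta (G.induce {x | x ≠ u}) ⟨w, hwu⟩) := by
  refine (sum_cheapWeight_le _ _ fun x hx => ?_).trans_eq
    (by rw [hw.card_erase_neighborFinset_of_induce])
  obtain ⟨hxu, hadj⟩ := mem_erase.mp hx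
  exact (hw.2 ⟨x, hxu⟩ ((mem_neighborFinset G w x).mp hadj)).trans (zeta_induce_le G _ _)

end SimpleGraph

theorem stmt_10_general {V : Type*} [Fintype V] [DecidableEq V] (G : SimpleGraph V)
    [DecidableRel G.Adj] (u w : V) (huw : G.Adj u w)
    (hu : Cheap G u)
    (hw : Cheap (G.induce {x : V | x ≠ u}) ⟨w, (G.ne_of_adj huw).symm⟩) :
    (∑ v ∈ Finset.univ.filter
        (fun v => v = u ∨ v = w ∨ G.Adj u v ∨ G.Adj w v),
      (1 : ℝ) / (zeta G v + 1/2)) ≤ 2 ∧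
    (∀ v ∈ ({u, w} : Finset V), (({u, w} : Finset V).filter (G.Adj v)).card ≤ 1) := by
  refine ⟨?_, fun v hv => card_filter_adj_pair_le_one G hv⟩
  set k := zeta (G.induce {x : V | x ≠ u}) ⟨w, (G.ne_of_adj huw).symm⟩
  have hzw : max (zeta G u) k ≤ zeta G w := max_le (hu.2 w huw) (zeta_induce_le G _ _)
  calc ∑ v ∈ univ.filter (fun v => v = u ∨ v = w ∨ G.Adj u v ∨ G.Adj w v),
        cheapWeight (zeta G v)
      ≤ cheapWeight (zeta G w) +
          ∑ v ∈ (insert u (G.neighborFinset u)).erase w, cheapWeight (zeta G v) +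
          ∑ v ∈ (G.neighborFinset w).erase u, cheapWeight (zeta G v) :=
        sum_closedNbhd_pair_le (fun v => cheapWeight_nonneg _) u w
    _ ≤ cheapWeight (max (zeta G u) k) + zeta G u * cheapWeight (zeta G u) + k * cheapWeight k :=
        add_le_add (add_le_add (cheapWeight_antitone hzw)
          (hu.sum_cheapWeight_erase_closedNbhd_le huw))
          hw.sum_cheapWeight_erase_neighborFinset_le_of_induce
    _ ≤ 2 := by
        linarith [mul_cheapWeight_add_cheapWeight_max_add_mul_cheapWeight_le_two (zeta G u) k]

theorem stmt_10 {V : Type*} [Fintype V] [DecidableEq V] (G : SimpleGraph V)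
    [DecidableRel G.Adj] (u w : V) (huw : G.Adj u w)
    (hu : Cheap G u)
    (honly : ∀ x : V, Cheap G x → G.Adj x w → x = u)
    (hw : Cheap (G.induce {x : V | x ≠ u}) ⟨w, (G.ne_of_adj huw).symm⟩) :
    (∑ v ∈ Finset.univ.filter
        (fun v => v = u ∨ v = w ∨ G.Adj u v ∨ G.Adj w v),
      (1 : ℝ) / (zeta G v + 1/2)) ≤ 2 ∧
    (∀ v ∈ ({u, w} : Finset V), (({u, w} : Finset V).filter (G.Adj v)).card ≤ 1) :=
  stmt_10_general G u w huw hu hw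
end

section
/- If u and w are two adjacent cheap vertices in a finite simple graph G, then {u, w} is a 1-cheap set, i.e., Σ_{v ∈ N[{u,w}]} 1/(ζ(v) + 1/2) ≤ 2. -/
open SimpleGraph Finset

theorem stmt_11 {V : Type*} [Fintype V] [DecidableEq V] (G : SimpleGraph V)
    [DecidableRel G.Adj] (u w : V) (huw : G.Adj u w)
    (hu : Cheap G u) (hw : Cheap G w) :
    (∑ v ∈ Finset.univ.filter
        (fun v => v = u ∨ v = w ∨ G.Adj u v ∨ G.Adj w v),
      (1 : ℝ) / (zeta G v + 1/2)) ≤ 2 := by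
  set d := zeta G u with hd
  have hdw : zeta G w = d := le_antisymm (hw.2 u huw.symm) (hu.2 w huw)
  set S := Finset.univ.filter
      (fun v => v = u ∨ v = w ∨ G.Adj u v ∨ G.Adj w v) with hS
  -- each term is at most 1/(d+1/2)
  have hterm : ∀ v ∈ S, (1 : ℝ) / (zeta G v + 1/2) ≤ 1 / (d + 1/2) := by
    intro v hv
    have hv' := (Finset.mem_filter.mp hv).2
    have hz : (d : ℕ) ≤ zeta G v := by
      rcases hv' with rfl | rfl | h | h
      · exact le_rfl
      · exact hdw.ge
      · exact hu.2 v h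
      · exact hdw ▸ hw.2 v h
    apply one_div_le_one_div_of_le
    · positivity
    · have : (d : ℝ) ≤ zeta G v := by exact_mod_cast hz
      linarith
  -- cardinality bound
  have hsub : S ⊆ G.neighborFinset u ∪ G.neighborFinset w := by
    intro v hv
    have hv' := (Finset.mem_filter.mp hv).2
    rcases hv' with rfl | rfl | h | h
    · exact Finset.mem_union_right _ (by simpa using huw.symm)
    · exact Finset.mem_union_left _ (by simpa using huw)
    · exact Finset.mem_union_left _ (by simpa using h)
    · exact Finset.mem_union_right _ (by simpa using h)
  have key : ∀ x : V, (G.neighborFinset x).card = (G.neighborSet x).ncard :=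
    fun x => (Set.ncard_eq_toFinset_card' _).symm
  have hdu : (G.neighborFinset u).card = d := by rw [hd, hu.1]; exact key u
  have hdw' : (G.neighborFinset w).card = d := by rw [← hdw, hw.1]; exact key w
  have hcard : S.card ≤ 2 * d := by
    calc S.card ≤ (G.neighborFinset u ∪ G.neighborFinset w).card :=
          Finset.card_le_card hsub
      _ ≤ (G.neighborFinset u).card + (G.neighborFinset w).card :=
          Finset.card_union_le _ _
      _ = 2 * d := by rw [hdu, hdw']; ring
  have hsum : (∑ v ∈ S, (1 : ℝ) / (zeta G v + 1/2)) ≤ S.card * (1 / (d + 1/2)) := by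
    simpa using Finset.sum_le_card_nsmul S _ _ hterm
  have hpos : (0 : ℝ) < d + 1/2 := by positivity
  have hcardR : (S.card : ℝ) ≤ 2 * d := by exact_mod_cast hcard
  calc (∑ v ∈ S, (1 : ℝ) / (zeta G v + 1/2)) ≤ S.card * (1 / (d + 1/2)) := hsum
    _ ≤ 2 * d * (1 / (d + 1/2)) := by
        apply mul_le_mul_of_nonneg_right hcardR (by positivity)
    _ ≤ 2 := by
        rw [mul_one_div, div_le_iff₀ hpos]
        linarith
end

section
/- If u and w are two non-adjacent cheap vertices in a finite simple graph G having at least one common neighbor, then {u, w} is a 1-cheap set, i.e., Σ_{v ∈ N[{u,w}]} 1/(ζ(v) + 1/2) ≤ 2. -/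
open SimpleGraph Finset

/-!
Let `a = ζ(u) ≤ b = ζ(w)`; the other case is symmetric. A cheap vertex `u` has `|N[u]| = ζ(u) + 1`
and `ζ(v) ≥ ζ(u)` for all `v ∈ N[u]`. Split `N[u] ∪ N[w]` into `N[w]` and `N[u] \ N[w]`: the first
part contributes at most `(b + 1)/(b + ½)`, and since the common neighbour lies in `N[u] ∩ N[w]`,
the second has at most `a` elements and contributes at most `a/(a + ½)`. Finally
`a/(a + ½) + (b + 1)/(b + ½) = 2 + ½ (1/(b + ½) - 1/(a + ½)) ≤ 2`.
-/

namespace SimpleGraph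

variable {V : Type*} [Fintype V] [DecidableEq V] {G : SimpleGraph V} [DecidableRel G.Adj]

variable (G) in
def closedNeighborFinset (u : V) : Finset V :=
  insert u (G.neighborFinset u)

@[simp]
lemma mem_closedNeighborFinset {u v : V} :
    v ∈ G.closedNeighborFinset u ↔ v = u ∨ G.Adj u v := by
  simp [closedNeighborFinset]

lemma card_closedNeighborFinset (u : V) : #(G.closedNeighborFinset u) = G.degree u + 1 :=
  card_insert_of_notMem (by simp)

end SimpleGraph

namespace Cheap

variable {V : Type*} [Fintype V] {G : SimpleGraph V} [DecidableRel G.Adj] {u : V}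

lemma zeta_eq_degree (hu : Cheap G u) : zeta G u = G.degree u := by
  rw [hu.1, ← card_neighborSet_eq_degree, Set.ncard_eq_toFinset_card', Set.toFinset_card]

variable [DecidableEq V]

lemma zeta_le_of_mem_closedNeighborFinset (hu : Cheap G u) {v : V}
    (hv : v ∈ G.closedNeighborFinset u) : zeta G u ≤ zeta G v := by
  rcases mem_closedNeighborFinset.mp hv with rfl | hadj
  · exact le_rfl
  · exact hu.2 v hadj

lemma sum_inv_zeta_le (hu : Cheap G u) {s : Finset V} (hs : s ⊆ G.closedNeighborFinset u) :
    ∑ v ∈ s, (1 : ℝ) / (zeta G v + 1/2) ≤ #s / (zeta G u + 1/2) := by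
  calc ∑ v ∈ s, (1 : ℝ) / (zeta G v + 1/2)
      ≤ ∑ _v ∈ s, (1 : ℝ) / (zeta G u + 1/2) := by
        refine sum_le_sum fun v hv => one_div_le_one_div_of_le (by positivity) ?_
        gcongr
        exact_mod_cast hu.zeta_le_of_mem_closedNeighborFinset (hs hv)
    _ = #s / (zeta G u + 1/2) := by rw [sum_const, nsmul_eq_mul, mul_one_div]

end Cheap

lemma div_add_div_le_two {a b : ℝ} (ha : 0 ≤ a) (hab : a ≤ b) :
    a / (a + 1/2) + (b + 1) / (b + 1/2) ≤ 2 := by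
  rw [div_add_div _ _ (by linarith) (by linarith), div_le_iff₀ (by nlinarith)]
  nlinarith

lemma Cheap.sum_union_closedNeighborFinset_le {V : Type*} [Fintype V] [DecidableEq V]
    {G : SimpleGraph V} [DecidableRel G.Adj] {u w p : V} (hu : Cheap G u) (hw : Cheap G w)
    (hup : G.Adj u p) (hwp : G.Adj w p) (hle : zeta G u ≤ zeta G w) :
    ∑ v ∈ G.closedNeighborFinset u ∪ G.closedNeighborFinset w, (1 : ℝ) / (zeta G v + 1/2)
      ≤ 2 := by
  set Nu := G.closedNeighborFinset u
  set Nw := G.closedNeighborFinset w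
  have hp : p ∈ Nu ∩ Nw := mem_inter.mpr ⟨by simp [Nu, hup], by simp [Nw, hwp]⟩
  have hcard : #(Nu \ Nw) ≤ zeta G u := by
    have := card_sdiff_add_card_inter Nu Nw
    have := card_pos.mpr ⟨p, hp⟩
    rw [card_closedNeighborFinset, ← hu.zeta_eq_degree] at *
    omega
  rw [← sdiff_union_self_eq_union, sum_union sdiff_disjoint]
  calc _ ≤ (#(Nu \ Nw) : ℝ) / (zeta G u + 1/2) + #Nw / (zeta G w + 1/2) :=
        add_le_add (hu.sum_inv_zeta_le sdiff_subset) (hw.sum_inv_zeta_le subset_rfl)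
    _ ≤ (zeta G u : ℝ) / (zeta G u + 1/2) + (zeta G w + 1) / (zeta G w + 1/2) := by
        rw [card_closedNeighborFinset, ← hw.zeta_eq_degree]
        push_cast
        gcongr ?_ / _ + _
        exact_mod_cast hcard
    _ ≤ 2 := div_add_div_le_two (by positivity) (by exact_mod_cast hle)

theorem stmt_12_general {V : Type*} [Fintype V] [DecidableEq V] (G : SimpleGraph V)
    [DecidableRel G.Adj] (u w : V)
    (hu : Cheap G u) (hw : Cheap G w)
    (hcommon : ∃ p : V, G.Adj u p ∧ G.Adj w p) :
    (∑ v ∈ Finset.univ.filter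
        (fun v => v = u ∨ v = w ∨ G.Adj u v ∨ G.Adj w v),
      (1 : ℝ) / (zeta G v + 1/2)) ≤ 2 := by
  obtain ⟨p, hup, hwp⟩ := hcommon
  have hset : Finset.univ.filter (fun v => v = u ∨ v = w ∨ G.Adj u v ∨ G.Adj w v)
      = G.closedNeighborFinset u ∪ G.closedNeighborFinset w := by
    ext v
    simp only [mem_filter, mem_univ, true_and, mem_union, mem_closedNeighborFinset]
    tauto
  rw [hset]
  rcases le_total (zeta G u) (zeta G w) with hle | hle
  · exact hu.sum_union_closedNeighborFinset_le hw hup hwp hle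
  · rw [union_comm]
    exact hw.sum_union_closedNeighborFinset_le hu hwp hup hle

theorem stmt_12 {V : Type*} [Fintype V] [DecidableEq V] (G : SimpleGraph V)
    [DecidableRel G.Adj] (u w : V) (hne : u ≠ w) (hnadj : ¬ G.Adj u w)
    (hu : Cheap G u) (hw : Cheap G w)
    (hcommon : ∃ p : V, G.Adj u p ∧ G.Adj w p) :
    (∑ v ∈ Finset.univ.filter
        (fun v => v = u ∨ v = w ∨ G.Adj u v ∨ G.Adj w v),
      (1 : ℝ) / (zeta G v + 1/2)) ≤ 2 :=
  stmt_12_general G u w hu hw hcommon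
end

section
/- For every finite simple graph G, α_1(G) ≥ Σ_{v ∈ V(G)} min{1, 1/(ζ(v) + 1/2)}, where α_1(G) is the maximum size of a vertex set S with Δ(G[S]) ≤ 1. -/
/-!
Delete vertices one at a time, always a vertex `u` of minimum degree `r` in the graph
induced on the set `A` of vertices not yet processed. Every vertex of `A` lies in a subgraph of
minimum degree `r`, so its weight is at most `w(r) = min 1 (1 / (r + 1/2))`.

The chosen set `T` is kept dissociated, and every `y ∈ T` carries a price `p y` bounding the weight
of each vertex still in `A`. The potential reserves `p y` for each neighbour of `y` in `A`, less
`p y / 2` if `y` has no neighbour in `T` yet (one of its neighbours in `A` may still join `T`).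
If `u` has a neighbour in `T` that has a neighbour in `T` too, or two neighbours in `T`, it is
discarded and its weight is paid by the drop of the potential. Otherwise `u` joins `T` with price
`w(r)`, or `min (w(r)) (p y₀)` if it has one neighbour `y₀ ∈ T`; the new potential term is at most
`r` times that price, and since `(r + 1/2) w(r) ≤ 1` the gain of one vertex pays for it together
with the weight of `u`, up to the half price released at `y₀`.
-/

open SimpleGraph Finset

noncomputable def dissocWeight (d : ℕ) : ℝ := min 1 (1 / ((d : ℝ) + 1/2))

lemma dissocWeight_nonneg (d : ℕ) : 0 ≤ dissocWeight d :=
  le_min zero_le_one (by positivity)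

lemma dissocWeight_le_one (d : ℕ) : dissocWeight d ≤ 1 := min_le_left _ _

lemma dissocWeight_mul_le_one (d : ℕ) : dissocWeight d * (d + 1/2) ≤ 1 :=
  calc dissocWeight d * (d + 1/2) ≤ 1 / ((d : ℝ) + 1/2) * (d + 1/2) := by
        gcongr; exact min_le_right _ _
    _ = 1 := by field_simp

lemma dissocWeight_antitone : Antitone dissocWeight := fun _ _ hab =>
  min_le_min_left _ (one_div_le_one_div_of_le (by positivity) (by gcongr))

namespace SimpleGraph

variable {V : Type*} {G : SimpleGraph V} [DecidableRel G.Adj]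

lemma le_zeta_of_le_card_filter [Finite V] {A : Finset V} {r : ℕ}
    (hA : ∀ x ∈ A, r ≤ #(A.filter (G.Adj x))) {w : V} (hw : w ∈ A) : r ≤ zeta G w := by
  set H : G.Subgraph := (⊤ : G.Subgraph).induce A
  have hmin : r ≤ subMinDeg G H := by
    refine le_csInf ⟨_, w, hw, rfl⟩ ?_
    rintro _ ⟨v, hv, rfl⟩
    have hv : v ∈ A := hv
    have hnbr : H.neighborSet v = ↑(A.filter (G.Adj v)) := by
      ext y
      simp [H, hv]
    change r ≤ (H.neighborSet v).ncard
    rw [hnbr, Set.ncard_coe_finset]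
    exact hA v hv
  have hbdd : BddAbove {n | ∃ H : G.Subgraph, w ∈ H.verts ∧ subMinDeg G H = n} :=
    ((Set.finite_range (subMinDeg G)).subset (by rintro _ ⟨H, -, rfl⟩; exact ⟨H, rfl⟩)).bddAbove
  exact hmin.trans (le_csSup hbdd ⟨H, hw, rfl⟩)

lemma exists_dissocWeight_zeta_le [Finite V] (A : Finset V) (hA : A.Nonempty) :
    ∃ u ∈ A, ∀ v ∈ A, dissocWeight (zeta G v) ≤ dissocWeight #(A.filter (G.Adj u)) := by
  obtain ⟨u, hu, hmin⟩ := A.exists_min_image (fun x => #(A.filter (G.Adj x))) hA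
  exact ⟨u, hu, fun v hv => dissocWeight_antitone (le_zeta_of_le_card_filter hmin hv)⟩

variable (G)

def IsDissociated (s : Finset V) : Prop := ∀ v ∈ s, #(s.filter (G.Adj v)) ≤ 1

/-- The share of the potential reserved for the neighbours in `A` of a vertex `y` of the chosen
set `T`: a vertex of `T` without neighbour in `T` may still receive one. -/
noncomputable def dissocDemand (A T : Finset V) (y : V) : ℝ :=
  if ∃ z ∈ T, G.Adj y z then #(A.filter (G.Adj y))
  else max ((#(A.filter (G.Adj y)) : ℝ) - 1/2) 0

noncomputable def dissocPotential (A T : Finset V) (p : V → ℝ) : ℝ :=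
  ∑ y ∈ T, p y * G.dissocDemand A T y

variable {G}

lemma dissocDemand_nonneg (A T : Finset V) (y : V) : 0 ≤ G.dissocDemand A T y := by
  unfold dissocDemand; split_ifs <;> positivity

lemma dissocDemand_le_card (A T : Finset V) (y : V) :
    G.dissocDemand A T y ≤ #(A.filter (G.Adj y)) := by
  unfold dissocDemand; split_ifs
  · exact le_rfl
  · exact max_le (by linarith) (by positivity)

lemma card_sub_half_le_dissocDemand (A T : Finset V) (y : V) :
    (#(A.filter (G.Adj y)) : ℝ) - 1/2 ≤ G.dissocDemand A T y := by
  unfold dissocDemand; split_ifs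
  · linarith
  · exact le_max_left _ _

lemma dissocDemand_mono {A A' T T' : Finset V} {y : V} (hA : A' ⊆ A)
    (hT : (∃ z ∈ T', G.Adj y z) → ∃ z ∈ T, G.Adj y z) :
    G.dissocDemand A' T' y ≤ G.dissocDemand A T y := by
  have hcard : (#(A'.filter (G.Adj y)) : ℝ) ≤ #(A.filter (G.Adj y)) := by
    exact_mod_cast card_le_card (filter_subset_filter _ hA)
  unfold dissocDemand
  split_ifs with h' h <;> first | exact absurd (hT h') h | skip
  · exact hcard
  · exact max_le (by linarith) (by positivity)
  · exact max_le_max (by linarith) le_rfl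

lemma dissocPotential_nonneg {p : V → ℝ} (A T : Finset V) (hp : ∀ y, 0 ≤ p y) :
    0 ≤ G.dissocPotential A T p :=
  sum_nonneg fun y _ => mul_nonneg (hp y) (dissocDemand_nonneg A T y)

variable [DecidableEq V]

lemma IsDissociated.insert {T : Finset V} {u : V} (hT : G.IsDissociated T)
    (hu : #(T.filter (G.Adj u)) ≤ 1) (hsat : ∀ y ∈ T, G.Adj u y → ∀ z ∈ T, ¬ G.Adj y z) :
    G.IsDissociated (insert u T) := by
  intro v hv
  rw [filter_insert]
  rcases mem_insert.1 hv with rfl | hv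
  · simpa using hu
  · split_ifs with hvu
    · simp [filter_eq_empty_iff.2 (hsat v hv hvu.symm)]
    · exact hT v hv

lemma card_filter_erase_add_one {A : Finset V} {u y : V} (hu : u ∈ A) (hyu : G.Adj y u) :
    (#((A.erase u).filter (G.Adj y)) : ℝ) + 1 = #(A.filter (G.Adj y)) := by
  rw [filter_erase, card_erase_of_mem (mem_filter.2 ⟨hu, hyu⟩)]
  have : 0 < #(A.filter (G.Adj y)) := card_pos.2 ⟨u, mem_filter.2 ⟨hu, hyu⟩⟩
  push_cast [Nat.cast_sub this]; ring

lemma dissocDemand_erase_add_half_le {A T T' : Finset V} {u y : V} (hu : u ∈ A)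
    (hyu : G.Adj y u) : G.dissocDemand (A.erase u) T' y + 1/2 ≤ G.dissocDemand A T y := by
  linarith [card_filter_erase_add_one hu hyu, dissocDemand_le_card (G := G) (A.erase u) T' y,
    card_sub_half_le_dissocDemand (G := G) A T y]

lemma dissocDemand_erase_add_one_le {A T : Finset V} {u y : V} (hu : u ∈ A)
    (hyu : G.Adj y u) (hsat : ∃ z ∈ T, G.Adj y z) :
    G.dissocDemand (A.erase u) T y + 1 ≤ G.dissocDemand A T y := by
  simp only [dissocDemand, if_pos hsat]
  linarith [card_filter_erase_add_one hu hyu]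

variable {p : V → ℝ} {A T : Finset V} {u : V}

lemma dissocPotential_erase_add_le (hu : u ∈ A) (hp : ∀ y, 0 ≤ p y) :
    G.dissocPotential (A.erase u) T p +
        ∑ y ∈ T.filter (G.Adj u), p y * (if ∃ z ∈ T, G.Adj y z then 1 else 1/2) ≤
      G.dissocPotential A T p := by
  rw [dissocPotential, dissocPotential, sum_filter, ← sum_add_distrib]
  refine sum_le_sum fun y _ => ?_
  split_ifs with huy hsat
  · rw [← mul_add]
    exact mul_le_mul_of_nonneg_left (dissocDemand_erase_add_one_le hu huy.symm hsat) (hp y)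
  · rw [← mul_add]
    exact mul_le_mul_of_nonneg_left (dissocDemand_erase_add_half_le hu huy.symm) (hp y)
  · rw [add_zero]
    exact mul_le_mul_of_nonneg_left (dissocDemand_mono (erase_subset _ _) id) (hp y)

lemma sum_dissocDemand_erase_insert_add_le (hu : u ∈ A) (hp : ∀ y, 0 ≤ p y) :
    ∑ y ∈ T, p y * G.dissocDemand (A.erase u) (insert u T) y +
        ∑ y ∈ T.filter (G.Adj u), p y / 2 ≤ G.dissocPotential A T p := by
  rw [dissocPotential, sum_filter, ← sum_add_distrib]
  refine sum_le_sum fun y _ => ?_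
  split_ifs with huy
  · rw [div_eq_mul_one_div, ← mul_add]
    exact mul_le_mul_of_nonneg_left (dissocDemand_erase_add_half_le hu huy.symm) (hp y)
  · rw [add_zero]
    refine mul_le_mul_of_nonneg_left (dissocDemand_mono (erase_subset _ _) ?_) (hp y)
    rintro ⟨z, hz, hyz⟩
    rcases mem_insert.1 hz with rfl | hz
    · exact absurd hyz.symm huy
    · exact ⟨z, hz, hyz⟩

lemma dissocPotential_insert_update (huT : u ∉ T) (A : Finset V) (a : ℝ) :
    G.dissocPotential A (insert u T) (Function.update p u a) =
      a * G.dissocDemand A (insert u T) u + ∑ y ∈ T, p y * G.dissocDemand A (insert u T) y := by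
  rw [dissocPotential, sum_insert huT, Function.update_self]
  congr 1
  refine sum_congr rfl fun y hy => ?_
  rw [Function.update_of_ne (by rintro rfl; exact huT hy)]

lemma dissocPotential_erase_add_le_of_discard {x : ℝ} (hu : u ∈ A) (hp : ∀ y, 0 ≤ p y)
    (hx : ∀ y ∈ T, x ≤ p y)
    (hdiscard : (∃ y ∈ T, G.Adj u y ∧ ∃ z ∈ T, G.Adj y z) ∨ 1 < #(T.filter (G.Adj u))) :
    x + G.dissocPotential (A.erase u) T p ≤ G.dissocPotential A T p := by
  set w : V → ℝ := fun y => p y * (if ∃ z ∈ T, G.Adj y z then 1 else 1/2)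
  have hw : ∀ y ∈ T, x / 2 ≤ w y ∧ 0 ≤ w y := fun y hy => by
    have := hx y hy; have := hp y
    simp only [w]; split_ifs <;> constructor <;> linarith
  suffices x ≤ ∑ y ∈ T.filter (G.Adj u), w y by
    linarith [dissocPotential_erase_add_le (G := G) (T := T) hu hp]
  have hw' : ∀ y ∈ T.filter (G.Adj u), 0 ≤ w y := fun y hy => (hw y (mem_filter.1 hy).1).2
  rcases hdiscard with ⟨y, hy, huy, hsat⟩ | hN
  · calc x ≤ w y := by simp only [w, if_pos hsat, mul_one]; exact hx y hy
      _ ≤ _ := single_le_sum hw' (mem_filter.2 ⟨hy, huy⟩)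
  · obtain ⟨y₁, hy₁, y₂, hy₂, hne⟩ := one_lt_card.1 hN
    calc x ≤ w y₁ + w y₂ := by
          linarith [(hw y₁ (mem_filter.1 hy₁).1).1, (hw y₂ (mem_filter.1 hy₂).1).1]
      _ = ∑ y ∈ {y₁, y₂}, w y := (sum_pair hne).symm
      _ ≤ _ := sum_le_sum_of_subset_of_nonneg (insert_subset hy₁ (singleton_subset_iff.2 hy₂))
          fun y hy _ => hw' y hy

lemma dissocPotential_insert_isolated_le (hu : u ∈ A) (huT : u ∉ T)
    (hN : T.filter (G.Adj u) = ∅) (hp : ∀ y, 0 ≤ p y) :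
    dissocWeight #(A.filter (G.Adj u)) + G.dissocPotential (A.erase u) (insert u T)
        (Function.update p u (dissocWeight #(A.filter (G.Adj u)))) ≤
      1 + G.dissocPotential A T p := by
  set r := #(A.filter (G.Adj u))
  have hsum := sum_dissocDemand_erase_insert_add_le (G := G) (T := T) hu hp
  rw [hN, sum_empty, add_zero] at hsum
  have hdemand : G.dissocDemand (A.erase u) (insert u T) u ≤ max ((r : ℝ) - 1/2) 0 := by
    have hunsat : ¬ ∃ z ∈ insert u T, G.Adj u z := by
      rintro ⟨z, hz, huz⟩
      rcases mem_insert.1 hz with rfl | hz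
      · exact G.irrefl huz
      · exact filter_eq_empty_iff.1 hN hz huz
    rw [dissocDemand, if_neg hunsat]
    gcongr
    exact card_le_card (filter_subset_filter _ (erase_subset _ _))
  have hweight : dissocWeight r * (1 + max ((r : ℝ) - 1/2) 0) ≤ 1 := by
    rcases Nat.eq_zero_or_pos r with hr | hr
    · simpa [hr] using dissocWeight_le_one 0
    · have : (1 : ℝ) ≤ r := by exact_mod_cast hr
      rw [max_eq_left (by linarith)]
      linarith [dissocWeight_mul_le_one r]
  rw [dissocPotential_insert_update huT]
  nlinarith [mul_le_mul_of_nonneg_left hdemand (dissocWeight_nonneg r)]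

lemma dissocPotential_insert_pendant_le {y₀ : V} (hu : u ∈ A) (huT : u ∉ T)
    (hN : T.filter (G.Adj u) = {y₀}) (hp : ∀ y, 0 ≤ p y) :
    min (dissocWeight #(A.filter (G.Adj u))) (p y₀) + G.dissocPotential (A.erase u) (insert u T)
        (Function.update p u (min (dissocWeight #(A.filter (G.Adj u))) (p y₀))) ≤
      1 + G.dissocPotential A T p := by
  set r := #(A.filter (G.Adj u))
  set m := min (dissocWeight r) (p y₀)
  have hsum := sum_dissocDemand_erase_insert_add_le (G := G) (T := T) hu hp
  rw [hN, sum_singleton] at hsum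
  have hdemand : G.dissocDemand (A.erase u) (insert u T) u ≤ r :=
    (dissocDemand_le_card _ _ u).trans
      (by exact_mod_cast card_le_card (filter_subset_filter _ (erase_subset _ _)))
  have hm : 0 ≤ m := le_min (dissocWeight_nonneg r) (hp y₀)
  have hmr : m * (r + 1/2) ≤ 1 :=
    (mul_le_mul_of_nonneg_right (min_le_left _ _) (by positivity)).trans
      (dissocWeight_mul_le_one r)
  rw [dissocPotential_insert_update huT]
  nlinarith [mul_le_mul_of_nonneg_left hdemand hm, min_le_right (dissocWeight r) (p y₀)]

variable (G) in
def HasDissociatedExtension (f : V → ℝ) (A T : Finset V) (p : V → ℝ) : Prop :=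
  ∃ s ⊆ A, G.IsDissociated (s ∪ T) ∧ ∑ v ∈ A, f v ≤ #s + G.dissocPotential A T p

variable {f : V → ℝ}

lemma HasDissociatedExtension.of_erase (hu : u ∈ A)
    (h : G.HasDissociatedExtension f (A.erase u) T p)
    (hle : f u + G.dissocPotential (A.erase u) T p ≤ G.dissocPotential A T p) :
    G.HasDissociatedExtension f A T p := by
  obtain ⟨s, hs, hdis, hsum⟩ := h
  refine ⟨s, hs.trans (erase_subset _ _), hdis, ?_⟩
  rw [← add_sum_erase _ _ hu]
  linarith

lemma HasDissociatedExtension.of_erase_insert {p' : V → ℝ} (hu : u ∈ A)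
    (h : G.HasDissociatedExtension f (A.erase u) (insert u T) p')
    (hle : f u + G.dissocPotential (A.erase u) (insert u T) p' ≤ 1 + G.dissocPotential A T p) :
    G.HasDissociatedExtension f A T p := by
  obtain ⟨s, hs, hdis, hsum⟩ := h
  have hus : u ∉ s := fun h => notMem_erase u A (hs h)
  refine ⟨insert u s, insert_subset hu (hs.trans (erase_subset _ _)), ?_, ?_⟩
  · rwa [insert_union, ← union_insert]
  · rw [← add_sum_erase _ _ hu, card_insert_of_notMem hus]
    push_cast
    linarith

theorem hasDissociatedExtension
    (hf : ∀ A : Finset V, A.Nonempty → ∃ u ∈ A, ∀ v ∈ A, f v ≤ dissocWeight #(A.filter (G.Adj u)))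
    (A T : Finset V) (p : V → ℝ) (hp : ∀ y, 0 ≤ p y) (hAT : Disjoint A T)
    (hT : G.IsDissociated T) (hprice : ∀ y ∈ T, ∀ v ∈ A, f v ≤ p y) :
    G.HasDissociatedExtension f A T p := by
  induction A using Finset.strongInduction generalizing T p with
  | H A ih =>
  rcases A.eq_empty_or_nonempty with rfl | hA
  · exact ⟨∅, empty_subset _, by simpa using hT, by simpa using dissocPotential_nonneg ∅ T hp⟩
  obtain ⟨u, hu, hfu⟩ := hf A hA
  have huT : u ∉ T := Finset.disjoint_left.1 hAT hu
  have hAT' : Disjoint (A.erase u) T := disjoint_of_subset_left (erase_subset _ _) hAT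
  have hprice' : ∀ y ∈ T, ∀ v ∈ A.erase u, f v ≤ p y := fun y hy v hv =>
    hprice y hy v (mem_of_mem_erase hv)
  by_cases hdiscard : (∃ y ∈ T, G.Adj u y ∧ ∃ z ∈ T, G.Adj y z) ∨ 1 < #(T.filter (G.Adj u))
  · exact .of_erase hu (ih _ (erase_ssubset hu) T p hp hAT' hT hprice')
      (dissocPotential_erase_add_le_of_discard hu hp (fun y hy => hprice y hy u hu) hdiscard)
  push Not at hdiscard
  obtain ⟨hunsat, hN⟩ := hdiscard
  have hadd : ∀ a, 0 ≤ a → (∀ v ∈ A, f v ≤ a) →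
      f u + G.dissocPotential (A.erase u) (insert u T) (Function.update p u a) ≤
        1 + G.dissocPotential A T p → G.HasDissociatedExtension f A T p := by
    intro a ha hfa hle
    refine .of_erase_insert hu (ih _ (erase_ssubset hu) _ _ ?_ ?_ (hT.insert hN hunsat) ?_) hle
    · intro y
      rcases eq_or_ne y u with rfl | hyu
      · simpa using ha
      · simpa [hyu] using hp y
    · exact disjoint_insert_right.2 ⟨notMem_erase u A, hAT'⟩
    · intro y hy v hv
      rcases mem_insert.1 hy with rfl | hyT
      · simpa using hfa v (mem_of_mem_erase hv)
      · rw [Function.update_of_ne (by rintro rfl; exact huT hyT)]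
        exact hprice' y hyT v hv
  rcases Nat.le_one_iff_eq_zero_or_eq_one.1 hN with hN | hN
  · exact hadd _ (dissocWeight_nonneg _) hfu (by
      linarith [hfu u hu, dissocPotential_insert_isolated_le hu huT (card_eq_zero.1 hN) hp])
  · obtain ⟨y₀, hN⟩ := card_eq_one.1 hN
    have hy₀T : y₀ ∈ T := mem_of_mem_filter y₀ (hN ▸ mem_singleton_self y₀)
    exact hadd _ (le_min (dissocWeight_nonneg _) (hp y₀))
      (fun v hv => le_min (hfu v hv) (hprice y₀ hy₀T v hv)) (by
        linarith [le_min (hfu u hu) (hprice y₀ hy₀T u hu),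
          dissocPotential_insert_pendant_le hu huT hN hp])

end SimpleGraph

theorem stmt_14 {V : Type*} [Fintype V] [DecidableEq V] (G : SimpleGraph V)
    [DecidableRel G.Adj] :
    ∃ s : Finset V, (∀ v ∈ s, (s.filter (G.Adj v)).card ≤ 1) ∧
      (∑ v : V, min 1 ((1 : ℝ) / (zeta G v + 1/2))) ≤ s.card := by
  obtain ⟨s, -, hs, hsum⟩ := G.hasDissociatedExtension (f := fun v => dissocWeight (zeta G v))
    exists_dissocWeight_zeta_le univ ∅ 0 (fun _ => le_rfl) (disjoint_empty_right _)
    (by simp [IsDissociated]) (by simp)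
  rw [union_empty] at hs
  rw [dissocPotential, sum_empty, add_zero] at hsum
  exact ⟨s, hs, hsum⟩
end

section
/- For the path P on 3k vertices (k ≥ 1), the 1-independence number satisfies α_1(P) = 2k, and this equals Σ_{v ∈ V(P)} min{1, 1/(ζ(v) + 1/2)}; hence the bound α_1(G) ≥ Z_2(G) is tight for these paths. -/
open SimpleGraph Finset

lemma zeta_bound_path (k : ℕ) (hk : 1 ≤ k) (v : Fin (3 * k)) :
    ∀ n ∈ {n | ∃ H : (SimpleGraph.pathGraph (3 * k)).Subgraph,
      v ∈ H.verts ∧ subMinDeg (SimpleGraph.pathGraph (3 * k)) H = n}, n ≤ 1 := by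
  rintro n ⟨H, hv, rfl⟩
  -- take the minimal vertex of H
  have hSne : (Fin.val '' H.verts).Nonempty := ⟨v.val, v, hv, rfl⟩
  have hmem := Nat.sInf_mem hSne
  obtain ⟨u0, hu0, hval⟩ := hmem
  have hle1 : (H.neighborSet u0).ncard ≤ 1 := by
    rw [Set.ncard_le_one_iff]
    intro a b ha hb
    have haH : a ∈ H.verts := ha.snd_mem
    have hbH : b ∈ H.verts := hb.snd_mem
    have hga := SimpleGraph.pathGraph_adj.mp (H.adj_sub ha)
    have hgb := SimpleGraph.pathGraph_adj.mp (H.adj_sub hb)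
    have hma : u0.val ≤ a.val := by
      rw [hval]; exact Nat.sInf_le (Set.mem_image_of_mem _ haH)
    have hmb : u0.val ≤ b.val := by
      rw [hval]; exact Nat.sInf_le (Set.mem_image_of_mem _ hbH)
    apply Fin.ext
    omega
  calc subMinDeg (SimpleGraph.pathGraph (3 * k)) H
      ≤ (H.neighborSet u0).ncard := Nat.sInf_le (Set.mem_image_of_mem _ hu0)
    _ ≤ 1 := hle1

lemma zeta_mem_path (k : ℕ) (hk : 1 ≤ k) (v : Fin (3 * k)) :
    1 ∈ {n | ∃ H : (SimpleGraph.pathGraph (3 * k)).Subgraph,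
      v ∈ H.verts ∧ subMinDeg (SimpleGraph.pathGraph (3 * k)) H = 1} := by
  refine ⟨⊤, trivial, ?_⟩
  have h3 : 3 ≤ 3 * k := by omega
  unfold subMinDeg
  have hns : ∀ w : Fin (3 * k),
      ((⊤ : (SimpleGraph.pathGraph (3 * k)).Subgraph).neighborSet w)
        = (SimpleGraph.pathGraph (3 * k)).neighborSet w := by
    intro w; rfl
  have hzero : ((⊤ : (SimpleGraph.pathGraph (3 * k)).Subgraph).neighborSet
      (⟨0, by omega⟩ : Fin (3 * k))).ncard = 1 := by
    rw [hns]
    have : (SimpleGraph.pathGraph (3 * k)).neighborSet (⟨0, by omega⟩ : Fin (3 * k))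
        = {(⟨1, by omega⟩ : Fin (3 * k))} := by
      ext w
      simp only [SimpleGraph.mem_neighborSet, SimpleGraph.pathGraph_adj, Set.mem_singleton_iff]
      constructor
      · intro h; apply Fin.ext; simp at h ⊢; omega
      · intro h; subst h; simp
    rw [this, Set.ncard_singleton]
  apply le_antisymm
  · exact Nat.sInf_le ⟨⟨0, by omega⟩, trivial, hzero⟩
  · have hne1 : (((fun v => ((⊤ : (SimpleGraph.pathGraph (3 * k)).Subgraph).neighborSet v).ncard)) ''
        (⊤ : (SimpleGraph.pathGraph (3 * k)).Subgraph).verts).Nonempty :=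
      ⟨1, ⟨⟨0, by omega⟩, trivial, hzero⟩⟩
    apply le_csInf hne1
    rintro m ⟨w, -, rfl⟩
    show 1 ≤ ((⊤ : (SimpleGraph.pathGraph (3 * k)).Subgraph).neighborSet w).ncard
    rw [SimpleGraph.Subgraph.neighborSet_top]
    have hne : ((SimpleGraph.pathGraph (3 * k)).neighborSet w).Nonempty := by
      by_cases h : w.val + 1 < 3 * k
      · exact ⟨⟨w.val + 1, h⟩, SimpleGraph.pathGraph_adj.mpr (Or.inl rfl)⟩
      · have hw : 1 ≤ w.val := by omega
        exact ⟨⟨w.val - 1, by omega⟩, SimpleGraph.pathGraph_adj.mpr (Or.inr (by simp; omega))⟩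
    have := Set.ncard_pos (Set.toFinite _) |>.mpr hne
    omega

lemma zeta_path (k : ℕ) (hk : 1 ≤ k) (v : Fin (3 * k)) :
    zeta (SimpleGraph.pathGraph (3 * k)) v = 1 := by
  unfold zeta
  apply le_antisymm
  · exact csSup_le ⟨1, zeta_mem_path k hk v⟩ (zeta_bound_path k hk v)
  · exact le_csSup ⟨1, zeta_bound_path k hk v⟩ (zeta_mem_path k hk v)

lemma div3_lt {k : ℕ} (v : Fin (3 * k)) : v.val / 3 < k :=
  Nat.div_lt_of_lt_mul v.isLt

set_option maxHeartbeats 1000000 in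
theorem stmt_15 (k : ℕ) (hk : 1 ≤ k) :
    sSup {n : ℕ | ∃ s : Finset (Fin (3 * k)),
        (∀ v ∈ s, ∀ x ∈ s, ∀ y ∈ s,
          (SimpleGraph.pathGraph (3 * k)).Adj v x →
          (SimpleGraph.pathGraph (3 * k)).Adj v y → x = y) ∧
        s.card = n} = 2 * k ∧
      ((2 * k : ℕ) : ℝ) =
        ∑ v : Fin (3 * k),
          min 1 ((1 : ℝ) / (zeta (SimpleGraph.pathGraph (3 * k)) v + 1/2)) := by
  constructor
  · -- Part 1
    set S := {n : ℕ | ∃ s : Finset (Fin (3 * k)),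
        (∀ v ∈ s, ∀ x ∈ s, ∀ y ∈ s,
          (SimpleGraph.pathGraph (3 * k)).Adj v x →
          (SimpleGraph.pathGraph (3 * k)).Adj v y → x = y) ∧
        s.card = n} with hS
    -- Upper bound: any such set has at most 2k elements
    have hbound : ∀ n ∈ S, n ≤ 2 * k := by
      rintro n ⟨s, hprop, rfl⟩
      have hfib := Finset.card_eq_sum_card_fiberwise
        (s := s) (f := fun v : Fin (3 * k) => (⟨v.val / 3, div3_lt v⟩ : Fin k))
        (t := (Finset.univ : Finset (Fin k))) (fun x _ => Finset.mem_univ _)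
      rw [hfib]
      have hfiber : ∀ i : Fin k,
          (s.filter (fun v : Fin (3 * k) =>
            (⟨v.val / 3, div3_lt v⟩ : Fin k) = i)).card ≤ 2 := by
        intro i
        by_contra hc
        push_neg at hc
        set a : Fin (3 * k) := ⟨3 * i.val, by omega⟩
        set b : Fin (3 * k) := ⟨3 * i.val + 1, by omega⟩
        set c : Fin (3 * k) := ⟨3 * i.val + 2, by omega⟩
        set Fi := s.filter (fun v : Fin (3 * k) =>
            (⟨v.val / 3, div3_lt v⟩ : Fin k) = i) with hFi
        have hsub : Fi ⊆ {a, b, c} := by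
          intro w hw
          rw [hFi, Finset.mem_filter] at hw
          have hwv : w.val / 3 = i.val := congrArg Fin.val hw.2
          simp only [Finset.mem_insert, Finset.mem_singleton]
          have : w.val = 3 * i.val ∨ w.val = 3 * i.val + 1 ∨ w.val = 3 * i.val + 2 := by
            omega
          rcases this with h | h | h
          · left; apply Fin.ext; exact h
          · right; left; apply Fin.ext; exact h
          · right; right; apply Fin.ext; exact h
        have hcard3 : ({a, b, c} : Finset (Fin (3 * k))).card ≤ 3 := by
          have h1 := Finset.card_insert_le a ({b, c} : Finset (Fin (3 * k)))
          have h2 := Finset.card_insert_le b ({c} : Finset (Fin (3 * k)))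
          have h3 : ({c} : Finset (Fin (3 * k))).card = 1 := Finset.card_singleton c
          omega
        have heq : Fi = {a, b, c} :=
          Finset.eq_of_subset_of_card_le hsub (le_trans hcard3 hc)
        have haF : a ∈ s := by
          have : a ∈ Fi := by rw [heq]; simp
          exact (Finset.mem_filter.mp this).1
        have hbF : b ∈ s := by
          have : b ∈ Fi := by rw [heq]; simp
          exact (Finset.mem_filter.mp this).1
        have hcF : c ∈ s := by
          have : c ∈ Fi := by rw [heq]; simp
          exact (Finset.mem_filter.mp this).1
        have hba : (SimpleGraph.pathGraph (3 * k)).Adj b a :=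
          SimpleGraph.pathGraph_adj.mpr (Or.inr rfl)
        have hbc : (SimpleGraph.pathGraph (3 * k)).Adj b c :=
          SimpleGraph.pathGraph_adj.mpr (Or.inl rfl)
        have := hprop b hbF a haF c hcF hba hbc
        have : (3 * i.val : ℕ) = 3 * i.val + 2 := congrArg Fin.val this
        omega
      calc ∑ i : Fin k, (s.filter (fun v : Fin (3 * k) =>
            (⟨v.val / 3, div3_lt v⟩ : Fin k) = i)).card
          ≤ ∑ _i : Fin k, 2 := Finset.sum_le_sum (fun i _ => hfiber i)
        _ = 2 * k := by simp [mul_comm]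
    -- Membership: there is such a set of size 2k
    have hmem : 2 * k ∈ S := by
      refine ⟨Finset.image (fun j : Fin (2 * k) =>
        (⟨3 * (j.val / 2) + j.val % 2, by omega⟩ : Fin (3 * k))) Finset.univ, ?_, ?_⟩
      · intro v hv x hx y hy hvx hvy
        have hmod : ∀ w : Fin (3 * k), w ∈ Finset.image (fun j : Fin (2 * k) =>
            (⟨3 * (j.val / 2) + j.val % 2, by omega⟩ : Fin (3 * k))) Finset.univ →
            w.val % 3 ≠ 2 := by
          intro w hw
          obtain ⟨j, -, rfl⟩ := Finset.mem_image.mp hw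
          simp only
          omega
        have h1 := hmod v hv
        have h2 := hmod x hx
        have h3 := hmod y hy
        have ha1 := SimpleGraph.pathGraph_adj.mp hvx
        have ha2 := SimpleGraph.pathGraph_adj.mp hvy
        apply Fin.ext
        omega
      · rw [Finset.card_image_of_injective _ ?_, Finset.card_univ, Fintype.card_fin]
        intro p q hpq
        have : 3 * (p.val / 2) + p.val % 2 = 3 * (q.val / 2) + q.val % 2 :=
          congrArg Fin.val hpq
        apply Fin.ext
        omega
    exact le_antisymm (csSup_le ⟨2 * k, hmem⟩ hbound) (le_csSup ⟨2 * k, hbound⟩ hmem)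
  · -- Part 2
    have hz : ∀ v : Fin (3 * k),
        min (1 : ℝ) ((1 : ℝ) / (zeta (SimpleGraph.pathGraph (3 * k)) v + 1/2)) = 2/3 := by
      intro v
      rw [zeta_path k hk v]
      norm_num
    rw [Finset.sum_congr rfl (fun v _ => hz v)]
    rw [Finset.sum_const, Finset.card_univ, Fintype.card_fin]
    push_cast
    ring
end

section
/- Let G be a finite simple graph that contains no 2-cheap set. Then the set C_1 of cheap vertices of G is an independent set. -/
open SimpleGraph Finset

/-- A nonempty finite set of vertices is 2-cheap if it consists of isolated vertices, or
consists of non-isolated vertices, induces a subgraph of maximum degree at most 2, and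
satisfies `∑_{v ∈ N[S]} 1/(ζ(v)+1/3) ≤ |S|`. -/
def TwoCheap {V : Type*} [Fintype V] [DecidableEq V] (G : SimpleGraph V)
    [DecidableRel G.Adj] (S : Finset V) : Prop :=
  S.Nonempty ∧
    ((∀ v ∈ S, G.degree v = 0) ∨
      ((∀ v ∈ S, 0 < G.degree v) ∧ (∀ v ∈ S, (S.filter (G.Adj v)).card ≤ 2) ∧
        (∑ v ∈ Finset.univ.filter (fun v => v ∈ S ∨ ∃ u ∈ S, G.Adj u v),
          (1 : ℝ) / (zeta G v + 1/3)) ≤ S.card))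

lemma zeta_eq_degree {V : Type*} [Fintype V] [DecidableEq V] (G : SimpleGraph V)
    [DecidableRel G.Adj] {u : V} (hu : Cheap G u) : zeta G u = G.degree u := by
  rw [hu.1]
  simp [SimpleGraph.degree, SimpleGraph.neighborFinset, Set.ncard_eq_toFinset_card']

lemma closed_nbhd_eq {V : Type*} [Fintype V] [DecidableEq V] (G : SimpleGraph V)
    [DecidableRel G.Adj] (u : V) :
    (univ.filter (fun v => v = u ∨ G.Adj u v)) = insert u (G.neighborFinset u) := by
  ext v
  simp [mem_neighborFinset, eq_comm, adj_comm]

lemma term_nonneg {V : Type*} (G : SimpleGraph V) (v : V) :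
    (0:ℝ) ≤ 1 / (zeta G v + 1/3) := by positivity

lemma sum_closed_nbhd_le {V : Type*} [Fintype V] [DecidableEq V] (G : SimpleGraph V)
    [DecidableRel G.Adj] {u : V} (hu : Cheap G u) :
    ∑ v ∈ univ.filter (fun v => v = u ∨ G.Adj u v), (1:ℝ) / (zeta G v + 1/3)
      ≤ ((G.degree u : ℝ) + 1) * (1 / (zeta G u + 1/3)) := by
  have hb : ∀ v ∈ univ.filter (fun v => v = u ∨ G.Adj u v),
      (1:ℝ) / (zeta G v + 1/3) ≤ 1 / (zeta G u + 1/3) := by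
    intro v hv
    simp only [mem_filter, mem_univ, true_and] at hv
    have hz : zeta G u ≤ zeta G v := by
      rcases hv with rfl | hadj
      · exact le_refl _
      · exact hu.2 v hadj
    apply one_div_le_one_div_of_le
    · positivity
    · have : (zeta G u : ℝ) ≤ zeta G v := by exact_mod_cast hz
      linarith
  have hcard : (univ.filter (fun v => v = u ∨ G.Adj u v)).card = G.degree u + 1 := by
    rw [closed_nbhd_eq, Finset.card_insert_of_notMem (by simp), card_neighborFinset_eq_degree]
  calc ∑ v ∈ univ.filter (fun v => v = u ∨ G.Adj u v), (1:ℝ) / (zeta G v + 1/3)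
      ≤ (univ.filter (fun v => v = u ∨ G.Adj u v)).card • (1 / ((zeta G u : ℝ) + 1/3)) :=
        Finset.sum_le_card_nsmul _ _ _ hb
    _ = ((G.degree u : ℝ) + 1) * (1 / (zeta G u + 1/3)) := by
        rw [hcard]; push_cast [nsmul_eq_mul]; ring

theorem stmt_16 {V : Type*} [Fintype V] [DecidableEq V] (G : SimpleGraph V)
    [DecidableRel G.Adj] (h : ¬ ∃ S : Finset V, TwoCheap G S) :
    ∀ u w : V, Cheap G u → Cheap G w → ¬ G.Adj u w := by
  intro u w hu hw hadj
  apply h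
  refine ⟨{u, w}, ?_⟩
  have hne : u ≠ w := G.ne_of_adj hadj
  have hcard2 : ({u, w} : Finset V).card = 2 := by
    rw [Finset.card_insert_of_notMem (by simpa using hne), Finset.card_singleton]
  constructor
  · exact ⟨u, by simp⟩
  right
  refine ⟨?_, ?_, ?_⟩
  · intro v hv
    simp only [Finset.mem_insert, Finset.mem_singleton] at hv
    rcases hv with rfl | rfl
    · exact G.degree_pos_iff_exists_adj v |>.2 ⟨w, hadj⟩
    · exact G.degree_pos_iff_exists_adj v |>.2 ⟨u, hadj.symm⟩
  · intro v _
    calc (({u, w} : Finset V).filter (G.Adj v)).card ≤ ({u, w} : Finset V).card :=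
          Finset.card_filter_le _ _
      _ = 2 := hcard2
  · rw [hcard2]
    set f : V → ℝ := fun v => (1:ℝ) / (zeta G v + 1/3) with hf
    set A := univ.filter (fun v => v = u ∨ G.Adj u v) with hA
    set B := univ.filter (fun v => v = w ∨ G.Adj w v) with hB
    have hT : univ.filter (fun v => v ∈ ({u, w} : Finset V) ∨ ∃ x ∈ ({u, w} : Finset V), G.Adj x v)
        = A ∪ B := by
      ext v
      simp only [hA, hB, Finset.mem_union, mem_filter, mem_univ, true_and,
        Finset.mem_insert, Finset.mem_singleton]
      constructor
      · rintro (hv | ⟨x, hx, hxv⟩)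
        · tauto
        · rcases hx with rfl | rfl <;> tauto
      · rintro ((rfl | hv) | (rfl | hv))
        · tauto
        · exact Or.inr ⟨u, by tauto⟩
        · tauto
        · exact Or.inr ⟨w, by tauto⟩
    rw [hT]
    have hsum : ∑ v ∈ A ∪ B, f v + ∑ v ∈ A ∩ B, f v = ∑ v ∈ A, f v + ∑ v ∈ B, f v :=
      Finset.sum_union_inter
    have huwAB : ({u, w} : Finset V) ⊆ A ∩ B := by
      intro v hv
      simp only [Finset.mem_insert, Finset.mem_singleton] at hv
      simp only [hA, hB, Finset.mem_inter, mem_filter, mem_univ, true_and]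
      rcases hv with rfl | rfl
      · exact ⟨Or.inl rfl, Or.inr hadj.symm⟩
      · exact ⟨Or.inr hadj, Or.inl rfl⟩
    have hInter : f u + f w ≤ ∑ v ∈ A ∩ B, f v := by
      have := Finset.sum_le_sum_of_subset_of_nonneg huwAB
        (fun v _ _ => term_nonneg G v)
      rwa [Finset.sum_pair hne] at this
    have hAle := sum_closed_nbhd_le G hu
    have hBle := sum_closed_nbhd_le G hw
    have hdu : (G.degree u : ℝ) = (zeta G u : ℝ) := by
      rw [zeta_eq_degree G hu]
    have hdw : (G.degree w : ℝ) = (zeta G w : ℝ) := by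
      rw [zeta_eq_degree G hw]
    have hfu : f u = 1 / ((zeta G u : ℝ) + 1/3) := rfl
    have hfw : f w = 1 / ((zeta G w : ℝ) + 1/3) := rfl
    have h1 : (zeta G u : ℝ) * (1 / ((zeta G u : ℝ) + 1/3)) ≤ 1 := by
      rw [mul_one_div, div_le_one (by positivity)]; linarith
    have h2 : (zeta G w : ℝ) * (1 / ((zeta G w : ℝ) + 1/3)) ≤ 1 := by
      rw [mul_one_div, div_le_one (by positivity)]; linarith
    have key : ∑ v ∈ A ∪ B, f v ≤ ∑ v ∈ A, f v + ∑ v ∈ B, f v - (f u + f w) := by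
      linarith
    rw [hdu] at hAle
    rw [hdw] at hBle
    have expand_u : ((zeta G u : ℝ) + 1) * (1 / ((zeta G u : ℝ) + 1/3)) =
        (zeta G u : ℝ) * (1 / ((zeta G u : ℝ) + 1/3)) + f u := by
      rw [hfu]; ring
    have expand_w : ((zeta G w : ℝ) + 1) * (1 / ((zeta G w : ℝ) + 1/3)) =
        (zeta G w : ℝ) * (1 / ((zeta G w : ℝ) + 1/3)) + f w := by
      rw [hfw]; ring
    push_cast
    linarith [hAle, hBle]
end

section
/- Let G be a forest on n vertices with exactly m isolated vertices, and let k ≥ 0 be an integer. Then α_k(G) ≥ (n − m)(k+1)/(k+2) + m, where α_k(G) is the maximum size of a vertex set S with Δ(G[S]) ≤ k. -/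
open SimpleGraph Finset

/-! Write `i(A)` for the number of isolated vertices of `G[A]`. By induction on `A` we find a
`k`-independent `S ⊆ A` with `(k+1)|A| + i(A) ≤ (k+2)|S|`. An isolated vertex is removed and put
back into `S`. Otherwise, pruning the leaves of `G[A]` and taking a vertex of degree at most one in
what remains gives a vertex `u` with `t ≥ 1` pendant neighbours `L` and at most one other
neighbour. If `t < k`, remove `L` and add it back to `S`; if `t > k`, remove `u` and `L` and add
`L`; if `t = k`, remove `u` with all its neighbours and add `u` and `L`. -/

namespace SimpleGraph

variable {V : Type*} {G : SimpleGraph V}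

theorem IsAcyclic.exists_neighborSet_subset_singleton [Finite V] [Nonempty V]
    (hG : G.IsAcyclic) : ∃ v w, G.neighborSet v ⊆ {w} := by
  obtain ⟨u, _, p, hp, hmax⟩ := Walk.exists_isPath_forall_isPath_length_le_length G
  refine ⟨u, p.snd, fun w (huw : G.Adj u w) => ?_⟩
  by_cases hw : w ∈ p.support
  · exact hG.eq_snd_of_adj_start hp huw hw
  · have := hmax _ _ _ (hp.cons hw (h := huw.symm))
    simp at this

theorem IsAcyclic.exists_mem_forall_adj_eq (hG : G.IsAcyclic) {B : Finset V}
    (hB : B.Nonempty) : ∃ v ∈ B, ∃ w, ∀ x ∈ B, G.Adj v x → x = w := by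
  have : Nonempty B := hB.to_subtype
  obtain ⟨⟨v, hv⟩, ⟨w, _⟩, h⟩ := (hG.induce (B : Set V)).exists_neighborSet_subset_singleton
  exact ⟨v, hv, w, fun x hx hvx =>
    congrArg Subtype.val (h (show (G.induce (B : Set V)).Adj ⟨v, hv⟩ ⟨x, hx⟩ from hvx))⟩

variable [DecidableRel G.Adj]

variable (G) in
def IsKIndependent (k : ℕ) (s : Finset V) : Prop :=
  ∀ v ∈ s, #(s.filter (G.Adj v)) ≤ k

variable (G) in
def isolatedIn (A : Finset V) : Finset V :=
  A.filter fun v => ∀ x ∈ A, ¬G.Adj v x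

variable (G) in
def HasLargeKIndependentSubset (k : ℕ) (A : Finset V) : Prop :=
  ∃ s ⊆ A, G.IsKIndependent k s ∧ (k + 1) * #A + #(G.isolatedIn A) ≤ (k + 2) * #s

theorem isKIndependent_singleton (k : ℕ) (v : V) : G.IsKIndependent k {v} := by
  simp [IsKIndependent, filter_singleton]

variable [DecidableEq V]

variable (G) in
def pendants (A : Finset V) (u : V) : Finset V :=
  A.filter fun l => G.Adj u l ∧ ∀ x ∈ A, G.Adj l x → x = u

theorem IsAcyclic.exists_pendants_nonempty (hG : G.IsAcyclic) {A : Finset V} (hA : A.Nonempty)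
    (hdeg : ∀ v ∈ A, ∃ x ∈ A, G.Adj v x) :
    ∃ u ∈ A, (G.pendants A u).Nonempty ∧
      ∃ z, ∀ x ∈ A, G.Adj u x → x ∈ G.pendants A u ∨ x = z := by
  classical
  -- `B` is the set of vertices with at least two neighbours in `A`; the centre is a vertex of
  -- degree at most one in `G[B]`, or any vertex if `G[A]` is a matching.
  set B := A.filter fun v => ¬∃ y, ∀ x ∈ A, G.Adj v x → x = y
  have pendant_of_notMem {u l : V} (hu : u ∈ A) (hl : l ∈ A) (hul : G.Adj u l) (hlB : l ∉ B) :
      l ∈ G.pendants A u := by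
    obtain ⟨y, hy⟩ : ∃ y, ∀ x ∈ A, G.Adj l x → x = y := by simpa [B, hl] using hlB
    obtain rfl := hy u hu hul.symm
    exact mem_filter.2 ⟨hl, hul, hy⟩
  obtain ⟨a, ha⟩ := hA
  rcases B.eq_empty_or_nonempty with hB | hB
  · obtain ⟨u, hu, hau⟩ := hdeg a ha
    have hu' : u ∈ G.pendants A a := pendant_of_notMem ha hu hau (by simp [hB])
    refine ⟨a, ha, ⟨u, hu'⟩, u, fun x hx hax => .inl ?_⟩
    obtain ⟨y, hy⟩ : ∃ y, ∀ x ∈ A, G.Adj a x → x = y := by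
      simpa [B, ha] using (show a ∉ B by simp [hB])
    rwa [hy x hx hax, ← hy u hu hau]
  · obtain ⟨u, huB, z, hz⟩ := hG.exists_mem_forall_adj_eq hB
    have hu : u ∈ A := mem_of_mem_filter u huB
    refine ⟨u, hu, ?_, z, fun x hx hux => ?_⟩
    · obtain ⟨l, hl, hul, hlz⟩ : ∃ l ∈ A, G.Adj u l ∧ l ≠ z := by
        simpa using not_exists.1 (mem_filter.1 huB).2 z
      exact ⟨l, pendant_of_notMem hu hl hul fun hlB => hlz (hz l hlB hul)⟩
    · by_cases hxB : x ∈ B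
      · exact .inr (hz x hxB hux)
      · exact .inl (pendant_of_notMem hu hx hux hxB)

theorem adj_eq_of_mem_pendants {A : Finset V} {u l x : V} (hl : l ∈ G.pendants A u)
    (hx : x ∈ A) (hlx : G.Adj l x) : x = u :=
  (mem_filter.1 hl).2.2 x hx hlx

theorem IsKIndependent.union {k : ℕ} {s t : Finset V} (hs : G.IsKIndependent k s)
    (ht : G.IsKIndependent k t) (hst : ∀ v ∈ s, ∀ w ∈ t, ¬G.Adj v w) :
    G.IsKIndependent k (s ∪ t) := by
  intro v hv
  rw [filter_union]
  rcases mem_union.1 hv with hv | hv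
  · rw [filter_false_of_mem fun w hw => hst v hv w hw, union_empty]
    exact hs v hv
  · rw [filter_false_of_mem fun w hw h => hst w hw v hv h.symm, empty_union]
    exact ht v hv

namespace HasLargeKIndependentSubset

variable {k : ℕ} {A : Finset V}

theorem of_erase_isolated {v : V} (hv : v ∈ G.isolatedIn A)
    (h : G.HasLargeKIndependentSubset k (A.erase v)) : G.HasLargeKIndependentSubset k A := by
  obtain ⟨s, hsA, hs, hcard⟩ := h
  obtain ⟨hvA, hvx⟩ := mem_filter.1 hv
  have hvs : v ∉ s := fun h => by simpa using hsA h
  refine ⟨insert v s, insert_subset hvA (hsA.trans (erase_subset _ _)), ?_, ?_⟩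
  · rw [insert_eq]
    refine (isKIndependent_singleton k v).union hs fun w hw x hx => ?_
    rw [mem_singleton.1 hw]
    exact hvx x (mem_of_mem_erase (hsA hx))
  · have hiso : G.isolatedIn A ⊆ insert v (G.isolatedIn (A.erase v)) := by
      intro x hx
      obtain ⟨hxA, hxy⟩ := mem_filter.1 hx
      rcases eq_or_ne x v with rfl | hxv
      · exact mem_insert_self _ _
      · exact mem_insert_of_mem
          (mem_filter.2 ⟨mem_erase.2 ⟨hxv, hxA⟩, fun y hy => hxy y (mem_of_mem_erase hy)⟩)
    have := (card_le_card hiso).trans (card_insert_le _ _)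
    rw [card_insert_of_notMem hvs, ← card_erase_add_one hvA]
    linarith

theorem of_sdiff_pendants {u z : V} (hA : G.isolatedIn A = ∅)
    (hz : ∀ x ∈ A, G.Adj u x → x ∈ G.pendants A u ∨ x = z) (ht : #(G.pendants A u) < k)
    (h : G.HasLargeKIndependentSubset k (A \ G.pendants A u)) :
    G.HasLargeKIndependentSubset k A := by
  set L := G.pendants A u
  obtain ⟨s, hsA, hs, hcard⟩ := h
  have hsA' : s ⊆ A := hsA.trans sdiff_subset
  have hLA : L ⊆ A := filter_subset _ _
  have hdisj : Disjoint s L := disjoint_of_subset_left hsA sdiff_disjoint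
  refine ⟨s ∪ L, union_subset hsA' hLA, fun v hv => ?_, ?_⟩
  · rcases mem_union.1 hv with hvs | hvL
    · by_cases hvu : v = u
      · subst hvu
        have : (s ∪ L).filter (G.Adj v) ⊆ insert z L := fun x hx => by
          obtain ⟨hx, hvx⟩ := mem_filter.1 hx
          rcases hz x (union_subset hsA' hLA hx) hvx with h | h
          · exact mem_insert_of_mem h
          · exact h ▸ mem_insert_self _ _
        have := (card_le_card this).trans (card_insert_le _ _)
        omega
      · have : (s ∪ L).filter (G.Adj v) ⊆ s.filter (G.Adj v) := fun x hx => by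
          obtain ⟨hx, hvx⟩ := mem_filter.1 hx
          refine mem_filter.2 ⟨(mem_union.1 hx).resolve_right fun hxL => hvu ?_, hvx⟩
          exact adj_eq_of_mem_pendants hxL (hsA' hvs) hvx.symm
        exact (card_le_card this).trans (hs v hvs)
    · have : (s ∪ L).filter (G.Adj v) ⊆ {u} := fun x hx => by
        obtain ⟨hx, hvx⟩ := mem_filter.1 hx
        exact mem_singleton.2 (adj_eq_of_mem_pendants hvL (union_subset hsA' hLA hx) hvx)
      have := (card_le_card this).trans (card_singleton u).le
      omega
  · have := Nat.mul_le_mul_left (k + 1) (card_le_card_sdiff_add_card (s := A) (t := L))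
    rw [hA, card_empty, card_union_of_disjoint hdisj]
    linarith

theorem of_sdiff_insert_pendants {u : V} (hA : G.isolatedIn A = ∅)
    (ht : k < #(G.pendants A u))
    (h : G.HasLargeKIndependentSubset k (A \ insert u (G.pendants A u))) :
    G.HasLargeKIndependentSubset k A := by
  set L := G.pendants A u
  obtain ⟨s, hsA, hs, hcard⟩ := h
  have hsA' : s ⊆ A := hsA.trans sdiff_subset
  have hLA : L ⊆ A := filter_subset _ _
  have hdisj : Disjoint s L :=
    disjoint_of_subset_left hsA (disjoint_of_subset_right (subset_insert _ _) sdiff_disjoint)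
  have huL : u ∉ L := fun h => G.irrefl (mem_filter.1 h).2.1
  refine ⟨s ∪ L, union_subset hsA' hLA, hs.union ?_ ?_, ?_⟩
  · intro l hl
    rw [filter_false_of_mem fun x hx hlx => huL (adj_eq_of_mem_pendants hl (hLA hx) hlx ▸ hx),
      card_empty]
    exact Nat.zero_le k
  · intro v hv l hl hvl
    have hvu : v = u := adj_eq_of_mem_pendants hl (hsA' hv) hvl.symm
    exact (mem_sdiff.1 (hsA hv)).2 (hvu ▸ mem_insert_self _ _)
  · have hcardA : #A ≤ #(A \ insert u L) + (#L + 1) :=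
      card_le_card_sdiff_add_card.trans (Nat.add_le_add_left (card_insert_le u L) _)
    have := Nat.mul_le_mul_left (k + 1) hcardA
    rw [hA, card_empty, card_union_of_disjoint hdisj]
    linarith

theorem of_sdiff_closedNeighborhood {u z : V} (hu : u ∈ A) (hA : G.isolatedIn A = ∅)
    (hz : ∀ x ∈ A, G.Adj u x → x ∈ G.pendants A u ∨ x = z) (ht : #(G.pendants A u) = k)
    (h : G.HasLargeKIndependentSubset k (A \ insert u (A.filter (G.Adj u)))) :
    G.HasLargeKIndependentSubset k A := by
  set L := G.pendants A u
  set N := A.filter (G.Adj u)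
  obtain ⟨s, hsA, hs, hcard⟩ := h
  have hsA' : s ⊆ A := hsA.trans sdiff_subset
  have hLN : L ⊆ N := fun l hl => mem_filter.2 ⟨mem_of_mem_filter l hl, (mem_filter.1 hl).2.1⟩
  have hLA : L ⊆ A := filter_subset _ _
  have hNL : N ⊆ insert z L := fun x hx => by
    obtain ⟨hx, hux⟩ := mem_filter.1 hx
    rcases hz x hx hux with h | h
    · exact mem_insert_of_mem h
    · exact h ▸ mem_insert_self _ _
  have huL : u ∉ L := fun h => G.irrefl (mem_filter.1 h).2.1
  have hdisj : Disjoint s (insert u L) :=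
    disjoint_of_subset_left hsA
      (disjoint_of_subset_right (insert_subset_insert u hLN) sdiff_disjoint)
  refine ⟨s ∪ insert u L, union_subset hsA' (insert_subset hu hLA), hs.union ?_ ?_, ?_⟩
  · intro v hv
    rcases mem_insert.1 hv with rfl | hvL
    · have : (insert v L).filter (G.Adj v) ⊆ L := fun x hx => by
        obtain ⟨hx, hvx⟩ := mem_filter.1 hx
        exact (mem_insert.1 hx).resolve_left (fun h => G.irrefl (h ▸ hvx))
      exact (card_le_card this).trans ht.le
    · have : (insert u L).filter (G.Adj v) ⊆ {u} := fun x hx => by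
        obtain ⟨hx, hvx⟩ := mem_filter.1 hx
        exact mem_singleton.2 (adj_eq_of_mem_pendants hvL (insert_subset hu hLA hx) hvx)
      have := (card_le_card this).trans (card_singleton u).le
      have := card_pos.2 ⟨v, hvL⟩
      omega
  · intro v hv w hw hvw
    rcases mem_insert.1 hw with rfl | hwL
    · exact (mem_sdiff.1 (hsA hv)).2 (mem_insert_of_mem (mem_filter.2 ⟨hsA' hv, hvw.symm⟩))
    · have hvu : v = u := adj_eq_of_mem_pendants hwL (hsA' hv) hvw.symm
      exact (mem_sdiff.1 (hsA hv)).2 (hvu ▸ mem_insert_self _ _)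
  · have hcardA : #A ≤ #(A \ insert u N) + (#L + 2) := by
      have := card_le_card_sdiff_add_card (s := A) (t := insert u N)
      have := card_insert_le u N
      have := (card_le_card hNL).trans (card_insert_le z L)
      omega
    have := Nat.mul_le_mul_left (k + 1) hcardA
    rw [hA, card_empty, card_union_of_disjoint hdisj, card_insert_of_notMem huL]
    linarith

end HasLargeKIndependentSubset

theorem IsAcyclic.hasLargeKIndependentSubset (hG : G.IsAcyclic) (k : ℕ) (A : Finset V) :
    G.HasLargeKIndependentSubset k A := by
  induction A using Finset.strongInduction with
  | H A ih =>
  obtain ⟨v, hv⟩ | hA := (G.isolatedIn A).eq_empty_or_nonempty.symm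
  · exact .of_erase_isolated hv (ih _ (erase_ssubset (mem_of_mem_filter v hv)))
  obtain rfl | hne := A.eq_empty_or_nonempty
  · exact ⟨∅, subset_rfl, by simp [IsKIndependent], by simp [hA]⟩
  obtain ⟨u, hu, ⟨l, hl⟩, z, hz⟩ :=
    hG.exists_pendants_nonempty hne (by simpa [isolatedIn, filter_eq_empty_iff] using hA)
  rcases lt_trichotomy #(G.pendants A u) k with ht | ht | ht
  · exact .of_sdiff_pendants hA hz ht (ih _ (sdiff_ssubset (filter_subset _ _) ⟨l, hl⟩))
  · exact .of_sdiff_closedNeighborhood hu hA hz ht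
      (ih _ (sdiff_ssubset (insert_subset hu (filter_subset _ _)) (insert_nonempty _ _)))
  · exact .of_sdiff_insert_pendants hA ht
      (ih _ (sdiff_ssubset (insert_subset hu (filter_subset _ _)) (insert_nonempty _ _)))

end SimpleGraph

theorem stmt_19_general {V : Type*} [Fintype V] (G : SimpleGraph V)
    [DecidableRel G.Adj] (hG : G.IsAcyclic) (k : ℕ) :
    ∃ s : Finset V, (∀ v ∈ s, (s.filter (G.Adj v)).card ≤ k) ∧
      ((Fintype.card V - (Finset.univ.filter fun v => G.degree v = 0).card : ℝ) *
          (k + 1) / (k + 2) +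
        (Finset.univ.filter fun v => G.degree v = 0).card ≤ s.card) := by
  classical
  obtain ⟨s, -, hs, hcard⟩ := hG.hasLargeKIndependentSubset k univ
  refine ⟨s, hs, ?_⟩
  have hiso : G.isolatedIn univ = univ.filter fun v => G.degree v = 0 := by
    ext v
    simp [isolatedIn, ← card_neighborFinset_eq_degree, eq_empty_iff_forall_notMem]
  rw [card_univ, hiso] at hcard
  rw [div_add' _ _ _ (by positivity), div_le_iff₀ (by positivity)]
  have : ((k : ℝ) + 1) * Fintype.card V + #(univ.filter fun v => G.degree v = 0)
      ≤ (k + 2) * #s := by exact_mod_cast hcard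
  linarith

theorem stmt_19 {V : Type*} [Fintype V] [DecidableEq V] (G : SimpleGraph V)
    [DecidableRel G.Adj] (hG : G.IsAcyclic) (k : ℕ) :
    ∃ s : Finset V, (∀ v ∈ s, (s.filter (G.Adj v)).card ≤ k) ∧
      ((Fintype.card V - (Finset.univ.filter fun v => G.degree v = 0).card : ℝ) *
          (k + 1) / (k + 2) +
        (Finset.univ.filter fun v => G.degree v = 0).card ≤ s.card) :=
  stmt_19_general G hG k
end
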